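/- arXiv:2207.02571 — 7 statements merged into one kernel-verified Lean document; each statement's English description precedes it below -/
import Mathlib

section
/- Let T be a string of length n, let S = T[p..p+s-1] be a substring of T, and let R = S[e..e+l-1] be a substring of S (so R is also a substring of T). If R and S have the same number of occurrences in T, i.e. |occ(R)| = |occ(S)|, then cover(R) ⊆ cover(S). -/
variable {α : Type*} [DecidableEq α]

/-- `occ T S`: the set of 1-based starting positions of occurrences of `S` in `T`,
i.e. `{ i ∈ [1, |T|-|S|+1] : T[i..i+|S|-1] = S }`. -/
def occ (T S : List α) : Finset ℕ :=
  (Finset.Icc 1 (T.length + 1 - S.length)).filter fun i =>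
    (T.drop (i - 1)).take S.length = S

/-- `cover T S`: the set of 1-based text positions covered by some occurrence of `S` in `T`. -/
def cover (T S : List α) : Finset ℕ :=
  (occ T S).biUnion fun i => Finset.Icc i (i + S.length - 1)

/-- `Γ ⊆ [1, |T|]` is a string attractor of `T`: every nonempty substring of `T`
has an occurrence covering a position of `Γ`. -/
def IsAttractor (T : List α) (Γ : Finset ℕ) : Prop :=
  Γ ⊆ Finset.Icc 1 T.length ∧
    ∀ P : List α, P ≠ [] → P <:+: T → (Γ ∩ cover T P).Nonempty

/-- `γ(T)`: the smallest size of a string attractor of `T`. -/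
noncomputable def gammaSize (T : List α) : ℕ :=
  sInf {k | ∃ Γ : Finset ℕ, IsAttractor T Γ ∧ Γ.card = k}

/-- `S` is a minimal substring of `T`: a nonempty substring of `T` all of whose proper
nonempty substrings occur strictly more often in `T` than `S` does. -/
def MinimalSubstring (T S : List α) : Prop :=
  S ≠ [] ∧ S <:+: T ∧
    ∀ R : List α, R ≠ [] → R <:+: S → R ≠ S → (occ T S).card < (occ T R).card

/-- If `S` is a substring of `T`, `R` is a (nonempty) substring of `S`, and `R` and `S`
have the same number of occurrences in `T`, then `cover(R) ⊆ cover(S)`. -/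
theorem cover_subset_of_card_occ_eq (T S R : List α)
    (hS : S <:+: T) (hR : R <:+: S) (hRne : R ≠ [])
    (hocc : (occ T R).card = (occ T S).card) :
    cover T R ⊆ cover T S := by
  obtain ⟨A, B, hAB⟩ := hR
  have hlen : A.length + R.length ≤ S.length := by
    rw [← hAB]; simp
  have hR1 : 1 ≤ R.length := List.length_pos_iff.mpr hRne
  have key : ∀ j ∈ occ T S, j + A.length ∈ occ T R := by
    intro j hj
    simp only [occ, Finset.mem_filter, Finset.mem_Icc] at hj ⊢
    obtain ⟨⟨hj1, hj2⟩, hjt⟩ := hj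
    have hjle : j + S.length ≤ T.length + 1 := by omega
    have hSpre : S <+: T.drop (j - 1) := by
      rw [List.prefix_iff_eq_take]; exact hjt.symm
    have hARpre : A ++ R <+: T.drop (j - 1) := by
      refine List.IsPrefix.trans ?_ hSpre
      rw [← hAB]; simp [List.append_assoc]
    have hRpre : R <+: T.drop (j + A.length - 1) := by
      have := hARpre.drop A.length
      simpa [List.drop_append, List.drop_drop, Nat.add_comm, show j + A.length - 1 = A.length + (j-1) by omega] using this
    refine ⟨⟨by omega, by omega⟩, ?_⟩
    exact (List.prefix_iff_eq_take.mp hRpre).symm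
  have hinj : Function.Injective (· + A.length : ℕ → ℕ) := fun a b h => by simpa using h
  have himg : (occ T S).image (· + A.length) = occ T R := by
    apply Finset.eq_of_subset_of_card_le
    · intro x hx
      obtain ⟨j, hj, rfl⟩ := Finset.mem_image.mp hx
      exact key j hj
    · rw [Finset.card_image_of_injective _ hinj, hocc]
  intro x hx
  rw [cover, Finset.mem_biUnion] at hx ⊢
  obtain ⟨i, hi, hxi⟩ := hx
  rw [← himg, Finset.mem_image] at hi
  obtain ⟨j, hj, rfl⟩ := hi
  refine ⟨j, hj, ?_⟩
  simp only [Finset.mem_Icc] at hxi ⊢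
  omega
end

section
/- (Lemma 1) For every nonempty substring S of a string T that is not a minimal substring of T, there exists a minimal substring S_min of T which is a substring of S and satisfies cover(S_min) ⊆ cover(S). -/
variable {α : Type*} [DecidableEq α]

/-!
Take a shortest nonempty infix `R` of `S` that occurs in `T` at most as often as `S` does; any
proper nonempty infix of `R` occurring no more often would be a shorter such infix, so `R` is
minimal. An occurrence of `S = X ++ R ++ Y` at `i` yields an occurrence of `R` at `i + |X|`, and
this injection between the occurrence sets is onto because `|occ R| ≤ |occ S|`, so every
occurrence of `R` lies inside an occurrence of `S`.
-/

theorem mem_occ_iff {T S : List α} {i : ℕ} :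
    i ∈ occ T S ↔ 1 ≤ i ∧ i ≤ T.length + 1 ∧ S <+: T.drop (i - 1) := by
  rw [occ, Finset.mem_filter, Finset.mem_Icc, List.prefix_iff_eq_take, eq_comm]
  constructor
  · rintro ⟨⟨h1, h2⟩, h⟩
    exact ⟨h1, by omega, h⟩
  · rintro ⟨h1, h2, h⟩
    have hlen := congrArg List.length h
    simp only [List.length_take, List.length_drop] at hlen
    exact ⟨⟨h1, by omega⟩, h⟩

theorem add_length_mem_occ_of_mem_occ_append {T X R Y : List α} {i : ℕ}
    (hi : i ∈ occ T (X ++ R ++ Y)) : i + X.length ∈ occ T R := by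
  obtain ⟨h1, h2, hpre⟩ := mem_occ_iff.mp hi
  have hlen := hpre.length_le
  simp only [List.length_append, List.length_drop] at hlen
  have hdrop : T.drop (i + X.length - 1) = (T.drop (i - 1)).drop X.length := by
    rw [List.drop_drop]
    congr 1
    omega
  obtain ⟨Z, hZ⟩ := hpre
  refine mem_occ_iff.mpr ⟨by omega, by omega, ?_⟩
  rw [hdrop, ← hZ, List.append_assoc, List.append_assoc, List.drop_left]
  exact List.prefix_append _ _

theorem occ_eq_image_of_card_le {T X R Y : List α}
    (hcard : (occ T R).card ≤ (occ T (X ++ R ++ Y)).card) :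
    occ T R = (occ T (X ++ R ++ Y)).image (· + X.length) := by
  refine (Finset.eq_of_subset_of_card_le ?_ ?_).symm
  · intro j hj
    obtain ⟨i, hi, rfl⟩ := Finset.mem_image.mp hj
    exact add_length_mem_occ_of_mem_occ_append hi
  · rwa [Finset.card_image_of_injective _ (add_left_injective _)]

theorem cover_subset_of_infix_of_card_occ_le {T R S : List α} (hRS : R <:+: S)
    (hcard : (occ T R).card ≤ (occ T S).card) : cover T R ⊆ cover T S := by
  obtain ⟨X, Y, rfl⟩ := hRS
  intro j hj
  simp only [cover, Finset.mem_biUnion, Finset.mem_Icc, occ_eq_image_of_card_le hcard,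
    Finset.mem_image] at hj ⊢
  obtain ⟨_, ⟨i, hi, rfl⟩, hj⟩ := hj
  refine ⟨i, hi, ?_⟩
  simp only [List.length_append] at hj ⊢
  omega

theorem exists_minimalSubstring_infix_card_occ_le {T S : List α} (hSne : S ≠ [])
    (hS : S <:+: T) :
    ∃ R, MinimalSubstring T R ∧ R <:+: S ∧ (occ T R).card ≤ (occ T S).card := by
  obtain ⟨R, ⟨hRne, hRS, hcard⟩, hshortest⟩ := (measure List.length).wf.has_min
    {R | R ≠ [] ∧ R <:+: S ∧ (occ T R).card ≤ (occ T S).card} ⟨S, hSne, List.infix_refl S, le_rfl⟩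
  refine ⟨R, ⟨hRne, hRS.trans hS, fun R' hR'ne hR'R hne => ?_⟩, hRS, hcard⟩
  by_contra! h
  exact hshortest R' ⟨hR'ne, hR'R.trans hRS, h.trans hcard⟩
    (lt_of_le_of_ne hR'R.length_le (mt hR'R.eq_of_length hne))

theorem exists_minimalSubstring_cover_subset_general (T S : List α)
    (hSne : S ≠ []) (hS : S <:+: T) :
    ∃ Smin : List α, MinimalSubstring T Smin ∧ Smin <:+: S ∧
      cover T Smin ⊆ cover T S := by
  obtain ⟨R, hR, hRS, hcard⟩ := exists_minimalSubstring_infix_card_occ_le hSne hS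
  exact ⟨R, hR, hRS, cover_subset_of_infix_of_card_occ_le hRS hcard⟩

/-- Lemma 1: for every nonempty substring `S` of `T` that is not a minimal substring of `T`,
there is a minimal substring `Smin` of `T` that is a substring of `S` with
`cover(Smin) ⊆ cover(S)`. -/
theorem exists_minimalSubstring_cover_subset (T S : List α)
    (hSne : S ≠ []) (hS : S <:+: T) (hSnotmin : ¬ MinimalSubstring T S) :
    ∃ Smin : List α, MinimalSubstring T Smin ∧ Smin <:+: S ∧
      cover T Smin ⊆ cover T S :=
  exists_minimalSubstring_cover_subset_general T S hSne hS
end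

section
/- Let T be a string and let P_1, …, P_m be nonempty substrings of T such that each P_t has exactly one occurrence in T (|occ(P_t)| = 1) and the occurrence intervals of P_1, …, P_m in T are pairwise disjoint. Then every string attractor of T has cardinality at least m; in particular, the smallest string attractor size γ(T) satisfies γ(T) ≥ m. -/
variable {α : Type*} [DecidableEq α]

lemma full_attractor (T : List α) : IsAttractor T (Finset.Icc 1 T.length) := by
  refine ⟨subset_rfl, ?_⟩
  intro Q hQ hinf
  obtain ⟨s, t, rfl⟩ := hinf
  have hQlen : 1 ≤ Q.length := List.length_pos_iff.mpr hQ
  refine ⟨s.length + 1, Finset.mem_inter.mpr ⟨?_, ?_⟩⟩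
  · simp only [Finset.mem_Icc, List.length_append]
    omega
  · unfold cover occ
    simp only [Finset.mem_biUnion, Finset.mem_filter, Finset.mem_Icc]
    refine ⟨s.length + 1, ⟨⟨by omega, ?_⟩, ?_⟩, ?_, by omega⟩
    · simp only [List.length_append]; omega
    · have : s ++ Q ++ t = s ++ (Q ++ t) := by simp [List.append_assoc]
      rw [this]
      simp [List.drop_left, List.take_left]
    · omega

/-- If `P 0, …, P (m-1)` are nonempty substrings of `T`, each occurring exactly once in `T`,
whose occurrence intervals are pairwise disjoint, then every string attractor of `T` has at
least `m` elements; in particular `γ(T) ≥ m`. -/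
theorem le_card_attractor_of_unique_disjoint (T : List α) (m : ℕ) (P : Fin m → List α)
    (hne : ∀ t, P t ≠ []) (hsub : ∀ t, P t <:+: T)
    (huniq : ∀ t, (occ T (P t)).card = 1)
    (hdisj : ∀ s t, s ≠ t → Disjoint (cover T (P s)) (cover T (P t))) :
    (∀ Γ : Finset ℕ, IsAttractor T Γ → m ≤ Γ.card) ∧ m ≤ gammaSize T := by
  have key : ∀ Γ : Finset ℕ, IsAttractor T Γ → m ≤ Γ.card := by
    intro Γ hΓ
    have h : ∀ t : Fin m, ∃ x, x ∈ Γ ∩ cover T (P t) :=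
      fun t => hΓ.2 (P t) (hne t) (hsub t)
    choose g hg using h
    have hinj : Function.Injective g := by
      intro s t hst
      by_contra hne'
      have h1 : g s ∈ cover T (P s) := (Finset.mem_inter.mp (hg s)).2
      have h2 : g s ∈ cover T (P t) := hst ▸ (Finset.mem_inter.mp (hg t)).2
      exact Finset.disjoint_left.mp (hdisj s t hne') h1 h2
    calc m = (Finset.univ : Finset (Fin m)).card := by simp
      _ ≤ Γ.card := Finset.card_le_card_of_injOn g
          (fun t _ => (Finset.mem_inter.mp (hg t)).1) hinj.injOn
  refine ⟨key, ?_⟩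
  unfold gammaSize
  refine le_csInf ?_ ?_
  · exact ⟨(Finset.Icc 1 T.length).card, Finset.Icc 1 T.length, full_attractor T, rfl⟩
  · rintro k ⟨Γ, hΓ, rfl⟩
    exact key Γ hΓ
end

section
/- For every k ≥ 2, the string T_k = abbbaaa·b^k over the alphabet {a, b} has smallest string attractor size γ(T_k) = 2. Concretely, {4, 7} is a string attractor of T_2 and {5, 8} is a string attractor of T_k for every k ≥ 3, and no one-element set is a string attractor of T_k. -/
variable {α : Type*} [DecidableEq α]

lemma mem_cover_of {T P : List α} {i g : ℕ} (h1 : 1 ≤ i)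
    (h2 : i + P.length ≤ T.length + 1)
    (h3 : (T.drop (i - 1)).take P.length = P)
    (h4 : i ≤ g) (h5 : g ≤ i + P.length - 1) : g ∈ cover T P := by
  unfold cover occ
  rw [Finset.mem_biUnion]
  refine ⟨i, ?_, Finset.mem_Icc.mpr ⟨h4, h5⟩⟩
  rw [Finset.mem_filter, Finset.mem_Icc]
  exact ⟨⟨h1, by omega⟩, h3⟩

lemma attr_wit {T P : List α} {Γ : Finset ℕ} (g i : ℕ) (hg : g ∈ Γ) (h1 : 1 ≤ i)
    (h2 : i + P.length ≤ T.length + 1)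
    (h3 : (T.drop (i - 1)).take P.length = P)
    (h4 : i ≤ g) (h5 : g ≤ i + P.length - 1) : (Γ ∩ cover T P).Nonempty :=
  ⟨g, Finset.mem_inter.mpr ⟨hg, mem_cover_of h1 h2 h3 h4 h5⟩⟩

lemma mem_cover_single {T : List α} {x : α} {g : ℕ} (h : g ∈ cover T [x]) :
    (T.drop (g - 1)).take 1 = [x] := by
  unfold cover occ at h
  rw [Finset.mem_biUnion] at h
  obtain ⟨i, hi, hg⟩ := h
  rw [Finset.mem_filter] at hi
  simp only [List.length_singleton] at hi hg
  rw [Finset.mem_Icc] at hg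
  have : g = i := by omega
  subst this
  exact hi.2

lemma attr_ge3 (a b : α) (k : ℕ) (hk : 3 ≤ k) (T : List α)
    (hT : T = [a, b, b, b, a, a, a] ++ List.replicate k b) :
    IsAttractor T ({5, 8} : Finset ℕ) := by
  have hTlen : T.length = 7 + k := by simp [hT]; omega
  have hrep : List.replicate k b = b :: b :: b :: List.replicate (k - 3) b := by
    conv_lhs => rw [show k = 3 + (k - 3) by omega]
    rw [List.replicate_add]
    rfl
  have hdrop7 : T.drop 7 = List.replicate k b := by rw [hT]; simp
  have hdrop6 : T.drop 6 = a :: b :: b :: b :: List.replicate (k - 3) b := by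
    rw [hT]; simp [hrep]
  have hdrop4 : T.drop 4 = a :: a :: a :: List.replicate k b := by rw [hT]; simp
  constructor
  · intro x hx
    simp only [Finset.mem_insert, Finset.mem_singleton] at hx
    rw [Finset.mem_Icc, hTlen]
    rcases hx with rfl | rfl <;> omega
  · intro P hne hinf
    obtain ⟨s, t, hst⟩ := hinf
    obtain ⟨d, hd⟩ : ∃ d, s.length = d := ⟨_, rfl⟩
    obtain ⟨m, hm⟩ : ∃ m, P.length = m := ⟨_, rfl⟩
    have hm1 : 1 ≤ m := by rw [← hm]; exact List.length_pos_iff.mpr hne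
    have hdm : d + m ≤ 7 + k := by
      have := congrArg List.length hst
      rw [hTlen] at this
      simp [hd, hm] at this
      omega
    have hP : (T.drop d).take m = P := by
      rw [← hst, ← hd, ← hm, List.append_assoc, List.drop_left, List.take_left]
    by_cases hc5 : d ≤ 4 ∧ 5 ≤ d + m
    · refine attr_wit 5 (d + 1) (by simp) (by omega)
        (by simp only [hm, hTlen]; omega) ?_ (by omega) (by simp only [hm]; omega)
      simpa [hm] using hP
    by_cases hc8 : d ≤ 7 ∧ 8 ≤ d + m
    · refine attr_wit 8 (d + 1) (by simp) (by omega)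
        (by simp only [hm, hTlen]; omega) ?_ (by omega) (by simp only [hm]; omega)
      simpa [hm] using hP
    have hsplit : d + m ≤ 4 ∨ (5 ≤ d ∧ d + m ≤ 7) ∨ 8 ≤ d := by omega
    rcases hsplit with hA | hB | hC
    · -- d + m ≤ 4
      have hd3 : d ≤ 3 := by omega
      have hm4 : m ≤ 4 := by omega
      interval_cases d <;> interval_cases m <;>
        (rw [hT] at hP; simp [hrep] at hP) <;>
        first
        | (exfalso; omega)
        | (subst hP
           first
           | (refine attr_wit 5 5 (by simp) (by omega)
               (by simp only [hTlen, List.length_cons, List.length_nil]; omega) ?_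
               (by omega) (by simp only [List.length_cons, List.length_nil]; omega)
              rw [hdrop4]; simp; done)
           | (refine attr_wit 8 7 (by simp) (by omega)
               (by simp only [hTlen, List.length_cons, List.length_nil]; omega) ?_
               (by omega) (by simp only [List.length_cons, List.length_nil]; omega)
              rw [hdrop6]; simp; done)
           | (refine attr_wit 8 8 (by simp) (by omega)
               (by simp only [hTlen, List.length_cons, List.length_nil]; omega) ?_
               (by omega) (by simp only [List.length_cons, List.length_nil]; omega)
              rw [hdrop7, hrep]; simp; done))
    · -- 5 ≤ d, d + m ≤ 7
      obtain ⟨hd5, hdm7⟩ := hB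
      have hd6 : d ≤ 6 := by omega
      have hm2 : m ≤ 2 := by omega
      interval_cases d <;> interval_cases m <;>
        (rw [hT] at hP; simp [hrep] at hP) <;>
        first
        | (exfalso; omega)
        | (subst hP
           refine attr_wit 5 5 (by simp) (by omega)
             (by simp only [hTlen, List.length_cons, List.length_nil]; omega) ?_
             (by omega) (by simp only [List.length_cons, List.length_nil]; omega)
           rw [hdrop4]; simp; done)
    · -- 8 ≤ d : P is all b's
      have hdropd : T.drop d = List.replicate (7 + k - d) b := by
        rw [hT, List.drop_append]
        rw [List.drop_eq_nil_of_le (le_trans (by norm_num) hC), List.drop_replicate]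
        simp
        omega
      have hPrep : P = List.replicate m b := by
        rw [← hP, hdropd, List.take_replicate, min_eq_left (by omega)]
      subst hPrep
      refine attr_wit 8 8 (by simp) (by omega)
        (by simp only [hTlen, List.length_replicate]; omega) ?_ (by omega)
        (by simp only [List.length_replicate]; omega)
      rw [hdrop7]
      simp only [List.length_replicate]
      rw [List.take_replicate, min_eq_left (by omega)]

lemma attr_eq2 (a b : α) (T : List α)
    (hT : T = [a, b, b, b, a, a, a, b, b]) :
    IsAttractor T ({4, 7} : Finset ℕ) := by
  have hTlen : T.length = 9 := by simp [hT]
  constructor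
  · intro x hx
    simp only [Finset.mem_insert, Finset.mem_singleton] at hx
    rw [Finset.mem_Icc, hTlen]
    rcases hx with rfl | rfl <;> omega
  · intro P hne hinf
    obtain ⟨s, t, hst⟩ := hinf
    obtain ⟨d, hd⟩ : ∃ d, s.length = d := ⟨_, rfl⟩
    obtain ⟨m, hm⟩ : ∃ m, P.length = m := ⟨_, rfl⟩
    have hm1 : 1 ≤ m := by rw [← hm]; exact List.length_pos_iff.mpr hne
    have hdm : d + m ≤ 9 := by
      have := congrArg List.length hst
      rw [hTlen] at this
      simp [hd, hm] at this
      omega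
    have hP : (T.drop d).take m = P := by
      rw [← hst, ← hd, ← hm, List.append_assoc, List.drop_left, List.take_left]
    by_cases hc4 : d ≤ 3 ∧ 4 ≤ d + m
    · refine attr_wit 4 (d + 1) (by simp) (by omega)
        (by simp only [hm, hTlen]; omega) ?_ (by omega) (by simp only [hm]; omega)
      simpa [hm] using hP
    by_cases hc7 : d ≤ 6 ∧ 7 ≤ d + m
    · refine attr_wit 7 (d + 1) (by simp) (by omega)
        (by simp only [hm, hTlen]; omega) ?_ (by omega) (by simp only [hm]; omega)
      simpa [hm] using hP
    have hsplit : d + m ≤ 3 ∨ (4 ≤ d ∧ d + m ≤ 6) ∨ 7 ≤ d := by omega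
    have hd8 : d ≤ 8 := by omega
    have hm9 : m ≤ 9 := by omega
    interval_cases d <;> interval_cases m <;>
      (rw [hT] at hP; simp at hP) <;>
      first
      | (exfalso; omega)
      | (subst hP
         first
         | (refine attr_wit 7 7 (by simp) (by omega)
             (by simp only [hTlen, List.length_cons, List.length_nil]; omega) ?_
             (by omega) (by simp only [List.length_cons, List.length_nil]; omega)
            rw [hT]; simp; done)
         | (refine attr_wit 7 6 (by simp) (by omega)
             (by simp only [hTlen, List.length_cons, List.length_nil]; omega) ?_
             (by omega) (by simp only [List.length_cons, List.length_nil]; omega)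
            rw [hT]; simp; done)
         | (refine attr_wit 4 4 (by simp) (by omega)
             (by simp only [hTlen, List.length_cons, List.length_nil]; omega) ?_
             (by omega) (by simp only [List.length_cons, List.length_nil]; omega)
            rw [hT]; simp; done)
         | (refine attr_wit 4 3 (by simp) (by omega)
             (by simp only [hTlen, List.length_cons, List.length_nil]; omega) ?_
             (by omega) (by simp only [List.length_cons, List.length_nil]; omega)
            rw [hT]; simp; done))

lemma no_single (a b : α) (hab : a ≠ b) (k : ℕ) (T : List α)
    (hT : T = [a, b, b, b, a, a, a] ++ List.replicate k b) :
    ∀ Γ : Finset ℕ, Γ.card = 1 → ¬ IsAttractor T Γ := by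
  intro Γ hcard hAtt
  obtain ⟨p, rfl⟩ := Finset.card_eq_one.mp hcard
  have hinfa : [a] <:+: T :=
    ⟨[], [b, b, b, a, a, a] ++ List.replicate k b, by rw [hT]; rfl⟩
  have hinfb : [b] <:+: T :=
    ⟨[a], [b, b, a, a, a] ++ List.replicate k b, by rw [hT]; rfl⟩
  obtain ⟨x, hx⟩ := hAtt.2 [a] (by simp) hinfa
  obtain ⟨y, hy⟩ := hAtt.2 [b] (by simp) hinfb
  rw [Finset.mem_inter, Finset.mem_singleton] at hx hy
  obtain ⟨rfl, hxa⟩ := hx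
  obtain ⟨rfl, hyb⟩ := hy
  have := (mem_cover_single hxa).symm.trans (mem_cover_single hyb)
  simp at this
  exact hab this

/-- For every `k ≥ 2`, the string `T_k = abbbaaa · b^k` (with `a ≠ b`) has smallest string
attractor size `γ(T_k) = 2`: concretely `{4, 7}` is a string attractor of `T_2`, `{5, 8}` is a
string attractor of `T_k` for `k ≥ 3`, and no one-element set is a string attractor of `T_k`. -/
theorem gammaSize_abbbaaa_bk (a b : α) (hab : a ≠ b) (k : ℕ) (hk : 2 ≤ k)
    (T : List α) (hT : T = [a, b, b, b, a, a, a] ++ List.replicate k b) :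
    gammaSize T = 2 ∧
    (k = 2 → IsAttractor T {4, 7}) ∧
    (3 ≤ k → IsAttractor T {5, 8}) ∧
    (∀ Γ : Finset ℕ, Γ.card = 1 → ¬ IsAttractor T Γ) := by
  have hns := no_single a b hab k T hT
  have h2 : ∃ Γ : Finset ℕ, IsAttractor T Γ ∧ Γ.card = 2 := by
    rcases eq_or_lt_of_le hk with h | h
    · exact ⟨{4, 7}, attr_eq2 a b T (by rw [hT, ← h]; rfl), by decide⟩
    · exact ⟨{5, 8}, attr_ge3 a b k h T hT, by decide⟩
  have hinfa : [a] <:+: T :=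
    ⟨[], [b, b, b, a, a, a] ++ List.replicate k b, by rw [hT]; rfl⟩
  refine ⟨?_, ?_, ?_, hns⟩
  · unfold gammaSize
    apply le_antisymm
    · exact Nat.sInf_le h2
    · refine le_csInf ⟨2, h2⟩ ?_
      rintro n ⟨Γ, hΓ, rfl⟩
      by_contra hlt
      push_neg at hlt
      interval_cases h : Γ.card
      · have hΓe : Γ = ∅ := Finset.card_eq_zero.mp h
        obtain ⟨x, hx⟩ := hΓ.2 [a] (by simp) hinfa
        rw [hΓe] at hx
        simp at hx
      · exact hns Γ h hΓ
  · intro hk2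
    exact attr_eq2 a b T (by rw [hT, hk2]; rfl)
  · intro hk3
    exact attr_ge3 a b k hk3 T hT
end

section
/- For every k ≥ 4, the string T'_k = abbbaaab·c·b^k over the alphabet {a, b, c} has smallest string attractor size γ(T'_k) = 5. Concretely, {1, 4, 6, 9, 10} is a string attractor of T'_k, and no string attractor of T'_k has fewer than 5 elements. -/
variable {α : Type*} [DecidableEq α]

/-! Each of `abb`, `ba`, `aab`, `c` and `b^k` (for `k ≥ 4`) occurs exactly once in
`abbbaaab·c·b^k`, at the pairwise disjoint intervals `[1, 3]`, `[4, 5]`, `[6, 8]`, `[9, 9]`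
and `[10, 9 + k]`, so an attractor needs a separate position in each of them. Conversely, a
factor whose occurrence avoids `{1, 4, 6, 9, 10}` is either a power of `b` inside the tail,
which also occurs at `10`, or one of `a`, `b`, `ab`, `bb`, which occur at `1`, `4`, `1`, `3`. -/

section

variable {T S : List α} {i p : ℕ}

theorem mem_occ_iff_exists_append :
    i ∈ occ T S ↔ ∃ s t, T = s ++ S ++ t ∧ i = s.length + 1 := by
  simp only [occ, Finset.mem_filter, Finset.mem_Icc]
  constructor
  · rintro ⟨⟨hi₁, hi₂⟩, hS⟩
    refine ⟨T.take (i - 1), (T.drop (i - 1)).drop S.length, ?_, ?_⟩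
    · conv_lhs => rw [← List.take_append_drop (i - 1) T,
        ← List.take_append_drop S.length (T.drop (i - 1))]
      rw [hS, List.append_assoc]
    · have := congrArg List.length hS
      simp only [List.length_take, List.length_drop] at this ⊢
      omega
  · rintro ⟨s, t, rfl, rfl⟩
    simp only [List.length_append, List.append_assoc, Nat.add_sub_cancel, List.drop_left,
      List.take_left, and_true]
    omega

theorem mem_occ_of_eq_append {s t : List α} (h : T = s ++ S ++ t) : s.length + 1 ∈ occ T S :=
  mem_occ_iff_exists_append.2 ⟨s, t, h, rfl⟩

theorem getElem?_of_mem_occ (hi : i ∈ occ T S) {j : ℕ} (hj : j < S.length) :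
    T[i - 1 + j]? = some S[j] := by
  obtain ⟨s, t, rfl, rfl⟩ := mem_occ_iff_exists_append.1 hi
  rw [Nat.add_sub_cancel, List.append_assoc, List.getElem?_append_right (by omega),
    Nat.add_sub_cancel_left, List.getElem?_append_left hj, List.getElem?_eq_getElem hj]

theorem inter_cover_nonempty_of_mem_occ {Γ : Finset ℕ} (hi : i ∈ occ T S) (hp : p ∈ Γ)
    (h₁ : i ≤ p) (h₂ : p ≤ i + S.length - 1) : (Γ ∩ cover T S).Nonempty :=
  ⟨p, Finset.mem_inter.2 ⟨hp, Finset.mem_biUnion.2 ⟨i, hi, Finset.mem_Icc.2 ⟨h₁, h₂⟩⟩⟩⟩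

theorem IsAttractor.exists_mem_of_occ_subset {Γ : Finset ℕ} (hΓ : IsAttractor T Γ)
    (hS : S ≠ []) (hST : S <:+: T) (hocc : occ T S ⊆ {i}) :
    ∃ p ∈ Γ, i ≤ p ∧ p ≤ i + S.length - 1 := by
  obtain ⟨p, hp⟩ := hΓ.2 S hS hST
  obtain ⟨hpΓ, hpS⟩ := Finset.mem_inter.1 hp
  obtain ⟨j, hj, hpj⟩ := Finset.mem_biUnion.1 hpS
  rw [Finset.mem_singleton.1 (hocc hj), Finset.mem_Icc] at hpj
  exact ⟨p, hpΓ, hpj⟩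

end

theorem gammaSize_eq_card {T : List α} {Γ₀ : Finset ℕ} (h₀ : IsAttractor T Γ₀)
    (hmin : ∀ Γ, IsAttractor T Γ → Γ₀.card ≤ Γ.card) : gammaSize T = Γ₀.card :=
  IsLeast.csInf_eq ⟨⟨Γ₀, h₀, rfl⟩, by rintro _ ⟨Γ, hΓ, rfl⟩; exact hmin Γ hΓ⟩

omit [DecidableEq α] in
theorem List.IsInfix.of_append_eq_append {s P t u v : List α}
    (h : s ++ P ++ t = u ++ v) (hs : u.length ≤ s.length) : P <:+: v := by
  rw [List.append_assoc] at h
  obtain ⟨w, rfl, hw⟩ | ⟨w, rfl, rfl⟩ := List.append_eq_append_iff.1 h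
  · obtain rfl : w = [] := by simpa using hs
    exact ⟨[], t, by simp [hw]⟩
  · exact ⟨w, t, by simp⟩

theorem length_le_card_of_pairwise_lt {l : List ℕ} {Γ : Finset ℕ}
    (hl : l.Pairwise (· < ·)) (hΓ : ∀ x ∈ l, x ∈ Γ) : l.length ≤ Γ.card := by
  rw [← List.toFinset_card_of_nodup hl.nodup]
  exact Finset.card_le_card fun x hx => hΓ x (List.mem_toFinset.1 hx)

section

omit [DecidableEq α]

def abbbaaab_c_bk (a b c : α) (k : ℕ) : List α :=
  [a, b, b, b, a, a, a, b] ++ [c] ++ List.replicate k b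

variable {a b c : α} {k : ℕ}

theorem getElem?_abbbaaab_c_bk {x : α} {n : ℕ}
    (h : (abbbaaab_c_bk a b c k)[n]? = some x) :
    x = a ∧ (n = 0 ∨ n = 4 ∨ n = 5 ∨ n = 6) ∨
      x = b ∧ (n = 1 ∨ n = 2 ∨ n = 3 ∨ n = 7 ∨ 9 ≤ n) ∨ x = c ∧ n = 8 := by
  rcases n with _ | _ | _ | _ | _ | _ | _ | _ | _ | n <;>
    simp only [abbbaaab_c_bk, List.cons_append, List.nil_append, List.getElem?_cons_zero,
      List.getElem?_cons_succ, Option.some.injEq, List.getElem?_replicate] at h <;>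
    grind

theorem getElem?_abbbaaab_c_bk_eq_some_a (hab : a ≠ b) (hac : a ≠ c) {n : ℕ}
    (h : (abbbaaab_c_bk a b c k)[n]? = some a) : n = 0 ∨ n = 4 ∨ n = 5 ∨ n = 6 := by
  simpa [hab, hac] using getElem?_abbbaaab_c_bk h

theorem getElem?_abbbaaab_c_bk_eq_some_b (hab : a ≠ b) (hbc : b ≠ c) {n : ℕ}
    (h : (abbbaaab_c_bk a b c k)[n]? = some b) : n = 1 ∨ n = 2 ∨ n = 3 ∨ n = 7 ∨ 9 ≤ n := by
  simpa [hab.symm, hbc] using getElem?_abbbaaab_c_bk h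

theorem getElem?_abbbaaab_c_bk_eq_some_c (hac : a ≠ c) (hbc : b ≠ c) {n : ℕ}
    (h : (abbbaaab_c_bk a b c k)[n]? = some c) : n = 8 := by
  simpa [hac.symm, hbc.symm] using getElem?_abbbaaab_c_bk h

end

section

variable {a b c : α} {k : ℕ}

theorem occ_abbbaaab_c_bk_abb_subset (hab : a ≠ b) (hac : a ≠ c) (hbc : b ≠ c) :
    occ (abbbaaab_c_bk a b c k) [a, b, b] ⊆ {1} := by
  intro i hi
  have h₀ := getElem?_abbbaaab_c_bk_eq_some_a hab hac (getElem?_of_mem_occ hi (j := 0) (by simp))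
  have h₁ := getElem?_abbbaaab_c_bk_eq_some_b hab hbc (getElem?_of_mem_occ hi (j := 1) (by simp))
  have h₂ := getElem?_abbbaaab_c_bk_eq_some_b hab hbc (getElem?_of_mem_occ hi (j := 2) (by simp))
  obtain ⟨s, t, -, rfl⟩ := mem_occ_iff_exists_append.1 hi
  simp only [Finset.mem_singleton]
  omega

theorem occ_abbbaaab_c_bk_ba_subset (hab : a ≠ b) (hac : a ≠ c) (hbc : b ≠ c) :
    occ (abbbaaab_c_bk a b c k) [b, a] ⊆ {4} := by
  intro i hi
  have h₀ := getElem?_abbbaaab_c_bk_eq_some_b hab hbc (getElem?_of_mem_occ hi (j := 0) (by simp))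
  have h₁ := getElem?_abbbaaab_c_bk_eq_some_a hab hac (getElem?_of_mem_occ hi (j := 1) (by simp))
  obtain ⟨s, t, -, rfl⟩ := mem_occ_iff_exists_append.1 hi
  simp only [Finset.mem_singleton]
  omega

theorem occ_abbbaaab_c_bk_aab_subset (hab : a ≠ b) (hac : a ≠ c) (hbc : b ≠ c) :
    occ (abbbaaab_c_bk a b c k) [a, a, b] ⊆ {6} := by
  intro i hi
  have h₀ := getElem?_abbbaaab_c_bk_eq_some_a hab hac (getElem?_of_mem_occ hi (j := 0) (by simp))
  have h₁ := getElem?_abbbaaab_c_bk_eq_some_a hab hac (getElem?_of_mem_occ hi (j := 1) (by simp))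
  have h₂ := getElem?_abbbaaab_c_bk_eq_some_b hab hbc (getElem?_of_mem_occ hi (j := 2) (by simp))
  obtain ⟨s, t, -, rfl⟩ := mem_occ_iff_exists_append.1 hi
  simp only [Finset.mem_singleton]
  omega

theorem occ_abbbaaab_c_bk_c_subset (hac : a ≠ c) (hbc : b ≠ c) :
    occ (abbbaaab_c_bk a b c k) [c] ⊆ {9} := by
  intro i hi
  have h₀ := getElem?_abbbaaab_c_bk_eq_some_c hac hbc (getElem?_of_mem_occ hi (j := 0) (by simp))
  obtain ⟨s, t, -, rfl⟩ := mem_occ_iff_exists_append.1 hi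
  simp only [Finset.mem_singleton]
  omega

theorem occ_abbbaaab_c_bk_replicate_subset (hab : a ≠ b) (hbc : b ≠ c) (hk : 4 ≤ k) :
    occ (abbbaaab_c_bk a b c k) (List.replicate k b) ⊆ {10} := by
  intro i hi
  have h := fun j (hj : j < 4) => getElem?_abbbaaab_c_bk_eq_some_b (n := i - 1 + j) hab hbc
    (by rw [getElem?_of_mem_occ hi (by simp; omega), List.getElem_replicate])
  have h₀ := h 0 (by omega)
  have h₁ := h 1 (by omega)
  have h₂ := h 2 (by omega)
  have h₃ := h 3 (by omega)
  obtain ⟨s, t, hst, rfl⟩ := mem_occ_iff_exists_append.1 hi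
  have := congrArg List.length hst
  simp only [abbbaaab_c_bk, List.length_append, List.length_cons, List.length_nil,
    List.length_replicate] at this
  simp only [Finset.mem_singleton]
  omega

theorem ten_mem_occ_abbbaaab_c_bk_replicate {m : ℕ} (hm : m ≤ k) :
    10 ∈ occ (abbbaaab_c_bk a b c k) (List.replicate m b) :=
  mem_occ_of_eq_append (s := [a, b, b, b, a, a, a, b, c]) (t := List.replicate (k - m) b) <| by
    rw [List.append_assoc, ← List.replicate_add, Nat.add_sub_cancel' hm]
    rfl

theorem five_le_card_of_isAttractor_abbbaaab_c_bk (hab : a ≠ b) (hac : a ≠ c) (hbc : b ≠ c)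
    (hk : 4 ≤ k) {Γ : Finset ℕ} (hΓ : IsAttractor (abbbaaab_c_bk a b c k) Γ) : 5 ≤ Γ.card := by
  obtain ⟨x₁, hx₁, h₁⟩ := hΓ.exists_mem_of_occ_subset (by simp)
    ⟨[], [b, a, a, a, b, c] ++ List.replicate k b, by simp [abbbaaab_c_bk]⟩
    (occ_abbbaaab_c_bk_abb_subset hab hac hbc)
  obtain ⟨x₂, hx₂, h₂⟩ := hΓ.exists_mem_of_occ_subset (by simp)
    ⟨[a, b, b], [a, a, b, c] ++ List.replicate k b, by simp [abbbaaab_c_bk]⟩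
    (occ_abbbaaab_c_bk_ba_subset hab hac hbc)
  obtain ⟨x₃, hx₃, h₃⟩ := hΓ.exists_mem_of_occ_subset (by simp)
    ⟨[a, b, b, b, a], [c] ++ List.replicate k b, by simp [abbbaaab_c_bk]⟩
    (occ_abbbaaab_c_bk_aab_subset hab hac hbc)
  obtain ⟨x₄, hx₄, h₄⟩ := hΓ.exists_mem_of_occ_subset (by simp)
    ⟨[a, b, b, b, a, a, a, b], List.replicate k b, by simp [abbbaaab_c_bk]⟩
    (occ_abbbaaab_c_bk_c_subset hac hbc)
  obtain ⟨x₅, hx₅, h₅⟩ := hΓ.exists_mem_of_occ_subset (by simp; omega)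
    ⟨[a, b, b, b, a, a, a, b, c], [], by simp [abbbaaab_c_bk]⟩
    (occ_abbbaaab_c_bk_replicate_subset hab hbc hk)
  simp only [List.length_cons, List.length_nil, List.length_replicate] at h₁ h₂ h₃ h₄ h₅
  exact length_le_card_of_pairwise_lt (l := [x₁, x₂, x₃, x₄, x₅]) (by simp; omega)
    (by simp [hx₁, hx₂, hx₃, hx₄, hx₅])

end

theorem isAttractor_abbbaaab_c_bk (a b c : α) {k : ℕ} (hk : 0 < k) :
    IsAttractor (abbbaaab_c_bk a b c k) {1, 4, 6, 9, 10} := by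
  have hT : abbbaaab_c_bk a b c k = [a, b, b, b, a, a, a, b, c] ++ List.replicate k b := rfl
  refine ⟨fun x hx => ?_, fun P hP ⟨s, t, hst⟩ => ?_⟩
  · simp [hT] at hx ⊢
    omega
  have hPlen := List.length_pos_iff.2 hP
  by_cases hcov : ∃ x ∈ ({1, 4, 6, 9, 10} : Finset ℕ),
      s.length + 1 ≤ x ∧ x ≤ s.length + P.length
  · obtain ⟨x, hx, h₁, h₂⟩ := hcov
    exact inter_cover_nonempty_of_mem_occ (mem_occ_of_eq_append hst.symm) hx h₁ (by omega)
  simp only [Finset.mem_insert, Finset.mem_singleton, exists_eq_or_imp, exists_eq_left, not_or,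
    not_and, not_le] at hcov
  by_cases h9 : 9 ≤ s.length
  · obtain ⟨hPk, hPb⟩ := List.infix_replicate_iff.1
      (List.IsInfix.of_append_eq_append (hst.trans hT) (by simpa using h9))
    rw [hPb]
    exact inter_cover_nonempty_of_mem_occ (ten_mem_occ_abbbaaab_c_bk_replicate hPk) (by simp)
      le_rfl (by simp; omega)
  -- The occurrence lies in one of the gaps [2, 3], [5], [7, 8] of `abbbaaab`.
  have hPeq : P = ((abbbaaab_c_bk a b c k).drop s.length).take P.length := by
    rw [← hst, List.append_assoc, List.drop_left, List.take_left]
  have hres : P = [a] ∨ P = [b] ∨ P = [a, b] ∨ P = [b, b] := by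
    obtain ⟨hs, hm⟩ | ⟨hs, hm⟩ | ⟨hs, hm⟩ | ⟨hs, hm⟩ | ⟨hs, hm⟩ | ⟨hs, hm⟩ | ⟨hs, hm⟩ :
        (s.length = 1 ∧ P.length = 1) ∨ (s.length = 1 ∧ P.length = 2) ∨
        (s.length = 2 ∧ P.length = 1) ∨ (s.length = 4 ∧ P.length = 1) ∨
        (s.length = 6 ∧ P.length = 1) ∨ (s.length = 6 ∧ P.length = 2) ∨
        (s.length = 7 ∧ P.length = 1) := by omega
    all_goals rw [hs, hm] at hPeq; simp [hPeq, abbbaaab_c_bk]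
  rcases hres with rfl | rfl | rfl | rfl
  · exact inter_cover_nonempty_of_mem_occ (i := 1) (p := 1)
      (by simp [occ, abbbaaab_c_bk]) (by simp) le_rfl (by simp)
  · exact inter_cover_nonempty_of_mem_occ (i := 4) (p := 4)
      (by simp [occ, abbbaaab_c_bk]) (by simp) le_rfl (by simp)
  · exact inter_cover_nonempty_of_mem_occ (i := 1) (p := 1)
      (by simp [occ, abbbaaab_c_bk]) (by simp) le_rfl (by simp)
  · exact inter_cover_nonempty_of_mem_occ (i := 3) (p := 4)
      (by simp [occ, abbbaaab_c_bk]) (by simp) (by simp) (by simp)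

/-- For every `k ≥ 4`, the string `T'_k = abbbaaab · c · b^k` (with `a, b, c` pairwise
distinct) has smallest string attractor size `γ(T'_k) = 5`: concretely `{1, 4, 6, 9, 10}`
is a string attractor of `T'_k`, and every string attractor has at least `5` elements. -/
theorem gammaSize_abbbaaab_c_bk (a b c : α)
    (hab : a ≠ b) (hac : a ≠ c) (hbc : b ≠ c) (k : ℕ) (hk : 4 ≤ k)
    (T : List α) (hT : T = [a, b, b, b, a, a, a, b] ++ [c] ++ List.replicate k b) :
    gammaSize T = 5 ∧
    IsAttractor T {1, 4, 6, 9, 10} ∧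
    (∀ Γ : Finset ℕ, IsAttractor T Γ → 5 ≤ Γ.card) := by
  subst hT
  have hΓ := isAttractor_abbbaaab_c_bk a b c (by omega : 0 < k)
  have hmin := fun Γ => five_le_card_of_isAttractor_abbbaaab_c_bk (Γ := Γ) hab hac hbc hk
  exact ⟨gammaSize_eq_card hΓ hmin, hΓ, hmin⟩
end

section
/- For every n ≥ 12 there exist a string T of length n over the alphabet {a, b, c} and a string T' obtained from T by inserting a single character, such that γ(T) = 2 and γ(T') = 5; consequently, the multiplicative sensitivity of the smallest string attractor size γ under a single character insertion is at least 5/2 for every such length n. (One may take T = abbbaaa·b^{n-7} and T' the result of inserting the character c into T at position 9.) -/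
variable {α : Type*} [DecidableEq α]

lemma mem_occ' {T S : List α} {i : ℕ} :
    i ∈ occ T S ↔ (1 ≤ i ∧ i - 1 + S.length ≤ T.length) ∧
      (T.drop (i - 1)).take S.length = S := by
  simp only [occ, Finset.mem_filter, Finset.mem_Icc]
  constructor
  · rintro ⟨⟨h1, h2⟩, h3⟩
    have hST : S.length ≤ T.length := by
      by_contra hc
      omega
    exact ⟨⟨h1, by omega⟩, h3⟩
  · rintro ⟨⟨h1, h2⟩, h3⟩
    exact ⟨⟨h1, by omega⟩, h3⟩

lemma mem_occ_at (T P : List α) {s : ℕ} (hs : s + P.length ≤ T.length)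
    (h : (T.drop s).take P.length = P) : s + 1 ∈ occ T P := by
  rw [mem_occ']
  simpa using ⟨by omega, h⟩

lemma mem_cover_of_s9 {T S : List α} {i g : ℕ} (hi : i ∈ occ T S) (h1 : i ≤ g)
    (h2 : g + 1 ≤ i + S.length) : g ∈ cover T S := by
  have hL : 1 ≤ S.length := by
    rcases Nat.eq_zero_or_pos S.length with h | h
    · omega
    · omega
  exact Finset.mem_biUnion.2 ⟨i, hi, Finset.mem_Icc.2 ⟨h1, by omega⟩⟩

lemma exists_of_mem_cover {T S : List α} {g : ℕ} (h : g ∈ cover T S) :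
    ∃ i ∈ occ T S, i ≤ g ∧ g ≤ i + S.length - 1 := by
  obtain ⟨i, hi, hg⟩ := Finset.mem_biUnion.1 h
  exact ⟨i, hi, (Finset.mem_Icc.1 hg).1, (Finset.mem_Icc.1 hg).2⟩

lemma occ_getElem {T S : List α} {i : ℕ} (h : i ∈ occ T S) {k : ℕ} (hk : k < S.length) :
    ∃ h' : i - 1 + k < T.length, T[i - 1 + k] = S[k] := by
  rw [mem_occ'] at h
  obtain ⟨⟨h1, h2⟩, h3⟩ := h
  have h' : i - 1 + k < T.length := by omega
  refine ⟨h', ?_⟩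
  have hk2 : k < (List.take S.length (List.drop (i - 1) T)).length := by
    simp; omega
  have := (List.getElem_of_eq h3 hk2).symm
  rw [this, List.getElem_take, List.getElem_drop]

lemma infix_decomp {P T : List α} (h : P <:+: T) :
    ∃ s, s + P.length ≤ T.length ∧ (T.drop s).take P.length = P := by
  obtain ⟨u, v, huv⟩ := h
  refine ⟨u.length, ?_, ?_⟩
  · rw [← huv]; simp
  · rw [← huv, List.append_assoc, List.drop_left, List.take_left]

lemma eq_replicate_of_getElem {P : List α} {x : α}
    (h : ∀ k (hk : k < P.length), P[k] = x) : P = List.replicate P.length x := by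
  apply List.ext_getElem (by simp)
  intro i h1 h2
  simp [h]

section strings
variable (a b c : α)

lemma getElem_T {m k : ℕ} (hk : k < 7 + m) :
    ([a,b,b,b,a,a,a] ++ List.replicate m b)[k]'(by simp; omega)
      = if k = 0 ∨ (4 ≤ k ∧ k ≤ 6) then a else b := by
  by_cases h : k < 7
  · interval_cases k <;> simp
  · rw [List.getElem_append_right (by simp; omega)]
    simp only [List.getElem_replicate]
    rw [if_neg (by omega)]

lemma getElem_T' {m' k : ℕ} (hk : k < 9 + m') :
    ([a,b,b,b,a,a,a,b,c] ++ List.replicate m' b)[k]'(by simp; omega)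
      = if k = 0 ∨ (4 ≤ k ∧ k ≤ 6) then a else if k = 8 then c else b := by
  by_cases h : k < 9
  · interval_cases k <;> simp
  · rw [List.getElem_append_right (by simp; omega)]
    simp only [List.getElem_replicate]
    rw [if_neg (by omega), if_neg (by omega)]

end strings

lemma P_getElem {T P : List α} {i : ℕ} (hocc : i ∈ occ T P) {k : ℕ} (hk : k < P.length) :
    ∃ h' : i - 1 + k < T.length, P[k] = T[i - 1 + k] := by
  obtain ⟨h', e⟩ := occ_getElem hocc hk
  exact ⟨h', e.symm⟩

section att
variable (a b c : α)

lemma attractor_T (m : ℕ) (hm : 5 ≤ m) :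
    IsAttractor ([a,b,b,b,a,a,a] ++ List.replicate m b) ({5, 8} : Finset ℕ) := by
  have hTlen : ([a,b,b,b,a,a,a] ++ List.replicate m b).length = 7 + m := by
    simp; omega
  constructor
  · intro g hg
    simp only [Finset.mem_insert, Finset.mem_singleton] at hg
    rw [Finset.mem_Icc, hTlen]
    omega
  · intro P hP hinf
    obtain ⟨s, hsL, hPs⟩ := infix_decomp hinf
    rw [hTlen] at hsL
    have hL1 : 1 ≤ P.length := List.length_pos_iff.mpr hP
    have hocc : s + 1 ∈ occ ([a,b,b,b,a,a,a] ++ List.replicate m b) P :=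
      mem_occ_at _ P (by rw [hTlen]; omega) hPs
    by_cases h4 : s ≤ 4 ∧ 4 < s + P.length
    · exact ⟨5, Finset.mem_inter.2 ⟨by simp, mem_cover_of_s9 hocc (by omega) (by omega)⟩⟩
    by_cases h7 : s ≤ 7 ∧ 7 < s + P.length
    · exact ⟨8, Finset.mem_inter.2 ⟨by simp, mem_cover_of_s9 hocc (by omega) (by omega)⟩⟩
    have hchar : ∀ k (hk : k < P.length),
        P[k] = if s + k = 0 ∨ (4 ≤ s + k ∧ s + k ≤ 6) then a else b := by
      intro k hk
      obtain ⟨h', e⟩ := P_getElem hocc hk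
      simp only [Nat.add_sub_cancel] at e
      rw [e, getElem_T a b (by omega)]
    have hcases : s + P.length ≤ 4 ∨ (5 ≤ s ∧ s + P.length ≤ 7) ∨ 8 ≤ s := by omega
    rcases hcases with h | h | h
    · -- window inside [0,4)
      rcases Nat.eq_zero_or_pos s with rfl | hs1
      · rcases Nat.lt_or_ge P.length 2 with h2 | h2
        · -- P = [a], occurrence at 4 (0-based)
          have hPa : P = [a] := by
            have hl : P.length = 1 := by omega
            apply List.ext_getElem (by simpa using hl)
            intro k h1' h2'
            have hk0 : k = 0 := by omega
            subst hk0
            rw [hchar 0 (by omega)]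
            simp
          have ho : 4 + 1 ∈ occ ([a,b,b,b,a,a,a] ++ List.replicate m b) P := by
            apply mem_occ_at _ P (by rw [hTlen, hPa]; simp; omega)
            rw [hPa]
            simp
          exact ⟨5, Finset.mem_inter.2 ⟨by simp,
            mem_cover_of_s9 ho (by omega) (by rw [hPa]; simp)⟩⟩
        · -- P = a :: b^(L-1), occurrence at 6
          obtain ⟨L', hL'⟩ : ∃ L', P.length = L' + 1 := ⟨P.length - 1, by omega⟩
          have hPform : P = a :: List.replicate L' b := by
            apply List.ext_getElem (by simp [hL'])
            intro k h1' h2'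
            rw [hchar k h1']
            rcases Nat.eq_zero_or_pos k with rfl | hk1
            · rw [if_pos (by omega)]; simp
            · rw [if_neg (by omega), List.getElem_cons]
              simp [Nat.pos_iff_ne_zero.mp hk1]
          have ho : 6 + 1 ∈ occ ([a,b,b,b,a,a,a] ++ List.replicate m b) P := by
            apply mem_occ_at _ P (by rw [hTlen]; omega)
            show List.take P.length (a :: List.replicate m b) = P
            conv_lhs => rw [hL']
            rw [List.take_succ_cons, List.take_replicate, min_eq_left (by omega)]
            exact hPform.symm
          exact ⟨8, Finset.mem_inter.2 ⟨by simp,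
            mem_cover_of_s9 ho (by omega) (by omega)⟩⟩
      · -- P = b^L, L ≤ 3, occurrence at 7
        have hPform : P = List.replicate P.length b := by
          apply eq_replicate_of_getElem
          intro k hk
          rw [hchar k hk, if_neg (by omega)]
        have ho : 7 + 1 ∈ occ ([a,b,b,b,a,a,a] ++ List.replicate m b) P := by
          apply mem_occ_at _ P (by rw [hTlen]; omega)
          show List.take P.length (List.replicate m b) = P
          rw [List.take_replicate, min_eq_left (by omega), ← hPform]
        exact ⟨8, Finset.mem_inter.2 ⟨by simp,
          mem_cover_of_s9 ho (by omega) (by omega)⟩⟩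
    · -- window inside [5,7): P = a^L, occurrence at 4
      have hPform : P = List.replicate P.length a := by
        apply eq_replicate_of_getElem
        intro k hk
        rw [hchar k hk, if_pos (by omega)]
      have ho : 4 + 1 ∈ occ ([a,b,b,b,a,a,a] ++ List.replicate m b) P := by
        apply mem_occ_at _ P (by rw [hTlen]; omega)
        show List.take P.length (a :: a :: a :: List.replicate m b) = P
        conv_rhs => rw [hPform]
        obtain ⟨L, hL⟩ : ∃ L, P.length = L := ⟨_, rfl⟩
        rw [hL]
        have hl1 : 1 ≤ L := by omega
        have hl2 : L ≤ 2 := by omega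
        interval_cases L <;> simp
      exact ⟨5, Finset.mem_inter.2 ⟨by simp,
        mem_cover_of_s9 ho (by omega) (by omega)⟩⟩
    · -- window inside tail: P = b^L, occurrence at 7
      have hPform : P = List.replicate P.length b := by
        apply eq_replicate_of_getElem
        intro k hk
        rw [hchar k hk, if_neg (by omega)]
      have ho : 7 + 1 ∈ occ ([a,b,b,b,a,a,a] ++ List.replicate m b) P := by
        apply mem_occ_at _ P (by rw [hTlen]; omega)
        show List.take P.length (List.replicate m b) = P
        rw [List.take_replicate, min_eq_left (by omega), ← hPform]
      exact ⟨8, Finset.mem_inter.2 ⟨by simp,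
        mem_cover_of_s9 ho (by omega) (by omega)⟩⟩

end att

section att2
variable (a b c : α)

lemma attractor_T' (m' : ℕ) (hm : 4 ≤ m') :
    IsAttractor ([a,b,b,b,a,a,a,b,c] ++ List.replicate m' b)
      ({3, 5, 7, 9, 10} : Finset ℕ) := by
  have hTlen : ([a,b,b,b,a,a,a,b,c] ++ List.replicate m' b).length = 9 + m' := by
    simp; omega
  constructor
  · intro g hg
    simp only [Finset.mem_insert, Finset.mem_singleton] at hg
    rw [Finset.mem_Icc, hTlen]
    omega
  · intro P hP hinf
    obtain ⟨s, hsL, hPs⟩ := infix_decomp hinf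
    rw [hTlen] at hsL
    have hL1 : 1 ≤ P.length := List.length_pos_iff.mpr hP
    have hocc : s + 1 ∈ occ ([a,b,b,b,a,a,a,b,c] ++ List.replicate m' b) P :=
      mem_occ_at _ P (by rw [hTlen]; omega) hPs
    by_cases h2' : s ≤ 2 ∧ 2 < s + P.length
    · exact ⟨3, Finset.mem_inter.2 ⟨by simp, mem_cover_of_s9 hocc (by omega) (by omega)⟩⟩
    by_cases h4 : s ≤ 4 ∧ 4 < s + P.length
    · exact ⟨5, Finset.mem_inter.2 ⟨by simp, mem_cover_of_s9 hocc (by omega) (by omega)⟩⟩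
    by_cases h6 : s ≤ 6 ∧ 6 < s + P.length
    · exact ⟨7, Finset.mem_inter.2 ⟨by simp, mem_cover_of_s9 hocc (by omega) (by omega)⟩⟩
    by_cases h8 : s ≤ 8 ∧ 8 < s + P.length
    · exact ⟨9, Finset.mem_inter.2 ⟨by simp, mem_cover_of_s9 hocc (by omega) (by omega)⟩⟩
    by_cases h9 : s ≤ 9 ∧ 9 < s + P.length
    · exact ⟨10, Finset.mem_inter.2 ⟨by simp, mem_cover_of_s9 hocc (by omega) (by omega)⟩⟩
    have hchar : ∀ k (hk : k < P.length),
        P[k] = if s + k = 0 ∨ (4 ≤ s + k ∧ s + k ≤ 6) then a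
          else if s + k = 8 then c else b := by
      intro k hk
      obtain ⟨h', e⟩ := P_getElem hocc hk
      simp only [Nat.add_sub_cancel] at e
      rw [e, getElem_T' a b c (by omega)]
    have hcases : (s = 0 ∧ P.length = 1) ∨ (s = 0 ∧ P.length = 2) ∨
        ((s = 1 ∨ s = 3 ∨ s = 7) ∧ P.length = 1) ∨ (s = 5 ∧ P.length = 1) ∨
        10 ≤ s := by omega
    have hbocc : P = [b] →
        (3 ∈ ({3, 5, 7, 9, 10} : Finset ℕ) ∩
          cover ([a,b,b,b,a,a,a,b,c] ++ List.replicate m' b) P) := by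
      intro hPb
      have ho : 2 + 1 ∈ occ ([a,b,b,b,a,a,a,b,c] ++ List.replicate m' b) P := by
        apply mem_occ_at _ P (by rw [hTlen, hPb]; simp; omega)
        rw [hPb]
        simp
      exact Finset.mem_inter.2 ⟨by simp, mem_cover_of_s9 ho (by omega) (by rw [hPb]; simp)⟩
    have haocc : P = [a] →
        (5 ∈ ({3, 5, 7, 9, 10} : Finset ℕ) ∩
          cover ([a,b,b,b,a,a,a,b,c] ++ List.replicate m' b) P) := by
      intro hPa
      have ho : 4 + 1 ∈ occ ([a,b,b,b,a,a,a,b,c] ++ List.replicate m' b) P := by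
        apply mem_occ_at _ P (by rw [hTlen, hPa]; simp; omega)
        rw [hPa]
        simp
      exact Finset.mem_inter.2 ⟨by simp, mem_cover_of_s9 ho (by omega) (by rw [hPa]; simp)⟩
    have hone : ∀ x : α, P.length = 1 → (∀ k (hk : k < P.length), P[k] = x) → P = [x] := by
      intro x hl hx
      apply List.ext_getElem (by simpa using hl)
      intro k h1' h2'
      have hk0 : k = 0 := by omega
      subst hk0
      rw [hx 0 (by omega)]
      simp
    rcases hcases with ⟨rfl, hl⟩ | ⟨rfl, hl⟩ | ⟨hs, hl⟩ | ⟨rfl, hl⟩ | h10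
    · -- P = [a]
      refine ⟨5, haocc (hone a hl ?_)⟩
      intro k hk
      rw [hchar k hk, if_pos (by omega)]
    · -- P = [a, b]
      have hPab : P = [a, b] := by
        apply List.ext_getElem (by simpa using hl)
        intro k h1' h2'
        rw [hchar k h1']
        have : k = 0 ∨ k = 1 := by omega
        rcases this with rfl | rfl
        · rw [if_pos (by omega)]; simp
        · rw [if_neg (by omega), if_neg (by omega)]; simp
      have ho : 6 + 1 ∈ occ ([a,b,b,b,a,a,a,b,c] ++ List.replicate m' b) P := by
        apply mem_occ_at _ P (by rw [hTlen, hPab]; simp; omega)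
        rw [hPab]
        simp
      exact ⟨7, Finset.mem_inter.2 ⟨by simp,
        mem_cover_of_s9 ho (by omega) (by rw [hPab]; simp)⟩⟩
    · -- P = [b]
      refine ⟨3, hbocc (hone b hl ?_)⟩
      intro k hk
      rw [hchar k hk, if_neg (by omega), if_neg (by omega)]
    · -- P = [a]
      refine ⟨5, haocc (hone a hl ?_)⟩
      intro k hk
      rw [hchar k hk, if_pos (by omega)]
    · -- tail: P = b^L, occurrence at 9
      have hPform : P = List.replicate P.length b := by
        apply eq_replicate_of_getElem
        intro k hk
        rw [hchar k hk, if_neg (by omega), if_neg (by omega)]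
      have ho : 9 + 1 ∈ occ ([a,b,b,b,a,a,a,b,c] ++ List.replicate m' b) P := by
        apply mem_occ_at _ P (by rw [hTlen]; omega)
        show List.take P.length (List.replicate m' b) = P
        rw [List.take_replicate, min_eq_left (by omega), ← hPform]
      exact ⟨10, Finset.mem_inter.2 ⟨by simp,
        mem_cover_of_s9 ho (by omega) (by omega)⟩⟩

end att2

section low
variable (a b c : α)

lemma T'_pos_a (hab : a ≠ b) (hac : a ≠ c) {m' j : ℕ} (hj : j < 9 + m')
    (e : ([a,b,b,b,a,a,a,b,c] ++ List.replicate m' b)[j]'(by simp; omega) = a) :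
    j = 0 ∨ (4 ≤ j ∧ j ≤ 6) := by
  rw [getElem_T' a b c hj] at e
  split_ifs at e with h1 h2
  · exact h1
  · exact absurd e.symm hac
  · exact absurd e.symm hab

lemma T'_pos_b (hab : a ≠ b) (hbc : b ≠ c) {m' j : ℕ} (hj : j < 9 + m')
    (e : ([a,b,b,b,a,a,a,b,c] ++ List.replicate m' b)[j]'(by simp; omega) = b) :
    ¬(j = 0 ∨ (4 ≤ j ∧ j ≤ 6)) ∧ j ≠ 8 := by
  rw [getElem_T' a b c hj] at e
  split_ifs at e with h1 h2
  · exact absurd e hab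
  · exact absurd e.symm hbc
  · exact ⟨h1, h2⟩

lemma T'_pos_c (hac : a ≠ c) (hbc : b ≠ c) {m' j : ℕ} (hj : j < 9 + m')
    (e : ([a,b,b,b,a,a,a,b,c] ++ List.replicate m' b)[j]'(by simp; omega) = c) :
    j = 8 := by
  rw [getElem_T' a b c hj] at e
  split_ifs at e with h1 h2
  · exact absurd e hac
  · exact h2
  · exact absurd e hbc

lemma T_pos_a (hab : a ≠ b) {m j : ℕ} (hj : j < 7 + m)
    (e : ([a,b,b,b,a,a,a] ++ List.replicate m b)[j]'(by simp; omega) = a) :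
    j = 0 ∨ (4 ≤ j ∧ j ≤ 6) := by
  rw [getElem_T a b hj] at e
  split_ifs at e with h1
  · exact h1
  · exact absurd e.symm hab

lemma T_pos_b (hab : a ≠ b) {m j : ℕ} (hj : j < 7 + m)
    (e : ([a,b,b,b,a,a,a] ++ List.replicate m b)[j]'(by simp; omega) = b) :
    ¬(j = 0 ∨ (4 ≤ j ∧ j ≤ 6)) := by
  rw [getElem_T a b hj] at e
  split_ifs at e with h1
  · exact absurd e hab
  · exact h1

lemma lower_T (hab : a ≠ b) {m : ℕ} (hm : 5 ≤ m) {Γ : Finset ℕ}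
    (h : IsAttractor ([a,b,b,b,a,a,a] ++ List.replicate m b) Γ) : 2 ≤ Γ.card := by
  have hTlen : ([a,b,b,b,a,a,a] ++ List.replicate m b).length = 7 + m := by
    simp; omega
  obtain ⟨g1, hg1⟩ := h.2 [a] (by simp)
    ⟨[], [b,b,b,a,a,a] ++ List.replicate m b, by simp⟩
  obtain ⟨g2, hg2⟩ := h.2 [b] (by simp)
    ⟨[a], [b,b,a,a,a] ++ List.replicate m b, by simp⟩
  rw [Finset.mem_inter] at hg1 hg2
  obtain ⟨i1, hi1, hle1, hge1⟩ := exists_of_mem_cover hg1.2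
  obtain ⟨i2, hi2, hle2, hge2⟩ := exists_of_mem_cover hg2.2
  obtain ⟨h1', e1⟩ := occ_getElem hi1 (show 0 < ([a] : List α).length by simp)
  obtain ⟨h2', e2⟩ := occ_getElem hi2 (show 0 < ([b] : List α).length by simp)
  rw [hTlen] at h1' h2'
  simp only [List.getElem_cons_zero] at e1 e2
  have p1 := T_pos_a a b hab (by omega : i1 - 1 + 0 < 7 + m) e1
  have p2 := T_pos_b a b hab (by omega : i2 - 1 + 0 < 7 + m) e2
  have hne : g1 ≠ g2 := by
    simp only [List.length_singleton] at hge1 hge2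
    have : g1 = i1 := by omega
    have : g2 = i2 := by omega
    omega
  have : 1 < Γ.card := Finset.one_lt_card.2 ⟨g1, hg1.1, g2, hg2.1, hne⟩
  omega

end low

section low2
variable (a b c : α)

lemma lower_T' (hab : a ≠ b) (hac : a ≠ c) (hbc : b ≠ c) {m' : ℕ} (hm : 4 ≤ m')
    {Γ : Finset ℕ}
    (h : IsAttractor ([a,b,b,b,a,a,a,b,c] ++ List.replicate m' b) Γ) : 5 ≤ Γ.card := by
  obtain ⟨k0, rfl⟩ : ∃ k, m' = 4 + k := ⟨m' - 4, by omega⟩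
  have hTlen : ([a,b,b,b,a,a,a,b,c] ++ List.replicate (4 + k0) b).length = 9 + (4 + k0) := by
    simp; omega
  obtain ⟨g1, hg1⟩ := h.2 [a,b,b] (by simp)
    ⟨[], [b,a,a,a,b,c] ++ List.replicate (4 + k0) b, by simp⟩
  obtain ⟨g2, hg2⟩ := h.2 [b,a] (by simp)
    ⟨[a,b,b], [a,a,b,c] ++ List.replicate (4 + k0) b, by simp⟩
  obtain ⟨g3, hg3⟩ := h.2 [a,a,b] (by simp)
    ⟨[a,b,b,b,a], c :: List.replicate (4 + k0) b, by simp⟩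
  obtain ⟨g4, hg4⟩ := h.2 [c] (by simp)
    ⟨[a,b,b,b,a,a,a,b], List.replicate (4 + k0) b, by simp⟩
  obtain ⟨g5, hg5⟩ := h.2 [b,b,b,b] (by simp)
    ⟨[a,b,b,b,a,a,a,b,c], List.replicate k0 b, by simp [List.replicate_add]⟩
  rw [Finset.mem_inter] at hg1 hg2 hg3 hg4 hg5
  obtain ⟨i1, hi1, hle1, hge1⟩ := exists_of_mem_cover hg1.2
  obtain ⟨i2, hi2, hle2, hge2⟩ := exists_of_mem_cover hg2.2
  obtain ⟨i3, hi3, hle3, hge3⟩ := exists_of_mem_cover hg3.2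
  obtain ⟨i4, hi4, hle4, hge4⟩ := exists_of_mem_cover hg4.2
  obtain ⟨i5, hi5, hle5, hge5⟩ := exists_of_mem_cover hg5.2
  simp only [List.length_cons, List.length_nil, List.length_singleton] at hge1 hge2 hge3 hge4 hge5
  -- position analysis for g1 : occurrence of [a,b,b] is at 1
  have hb1 : g1 ≤ 3 := by
    obtain ⟨ha', e0⟩ := occ_getElem hi1 (show 0 < ([a,b,b] : List α).length by simp)
    obtain ⟨hb', e1⟩ := occ_getElem hi1 (show 1 < ([a,b,b] : List α).length by simp)
    obtain ⟨hc', e2⟩ := occ_getElem hi1 (show 2 < ([a,b,b] : List α).length by simp)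
    rw [hTlen] at ha' hb' hc'
    simp only [List.getElem_cons_zero, List.getElem_cons_succ] at e0 e1 e2
    have p0 := T'_pos_a a b c hab hac (by omega : i1 - 1 + 0 < 9 + (4 + k0)) e0
    have p1 := T'_pos_b a b c hab hbc (by omega : i1 - 1 + 1 < 9 + (4 + k0)) e1
    have p2 := T'_pos_b a b c hab hbc (by omega : i1 - 1 + 2 < 9 + (4 + k0)) e2
    have hi1' := (mem_occ'.1 hi1).1.1
    omega
  have hb2 : 4 ≤ g2 ∧ g2 ≤ 5 := by
    obtain ⟨ha', e0⟩ := occ_getElem hi2 (show 0 < ([b,a] : List α).length by simp)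
    obtain ⟨hb', e1⟩ := occ_getElem hi2 (show 1 < ([b,a] : List α).length by simp)
    rw [hTlen] at ha' hb'
    simp only [List.getElem_cons_zero, List.getElem_cons_succ] at e0 e1
    have p0 := T'_pos_b a b c hab hbc (by omega : i2 - 1 + 0 < 9 + (4 + k0)) e0
    have p1 := T'_pos_a a b c hab hac (by omega : i2 - 1 + 1 < 9 + (4 + k0)) e1
    have hi2' := (mem_occ'.1 hi2).1.1
    omega
  have hb3 : 6 ≤ g3 ∧ g3 ≤ 8 := by
    obtain ⟨ha', e0⟩ := occ_getElem hi3 (show 0 < ([a,a,b] : List α).length by simp)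
    obtain ⟨hb', e1⟩ := occ_getElem hi3 (show 1 < ([a,a,b] : List α).length by simp)
    obtain ⟨hc', e2⟩ := occ_getElem hi3 (show 2 < ([a,a,b] : List α).length by simp)
    rw [hTlen] at ha' hb' hc'
    simp only [List.getElem_cons_zero, List.getElem_cons_succ] at e0 e1 e2
    have p0 := T'_pos_a a b c hab hac (by omega : i3 - 1 + 0 < 9 + (4 + k0)) e0
    have p1 := T'_pos_a a b c hab hac (by omega : i3 - 1 + 1 < 9 + (4 + k0)) e1
    have p2 := T'_pos_b a b c hab hbc (by omega : i3 - 1 + 2 < 9 + (4 + k0)) e2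
    have hi3' := (mem_occ'.1 hi3).1.1
    omega
  have hb4 : g4 = 9 := by
    obtain ⟨ha', e0⟩ := occ_getElem hi4 (show 0 < ([c] : List α).length by simp)
    rw [hTlen] at ha'
    simp only [List.getElem_cons_zero] at e0
    have p0 := T'_pos_c a b c hac hbc (by omega : i4 - 1 + 0 < 9 + (4 + k0)) e0
    have hi4' := (mem_occ'.1 hi4).1.1
    omega
  have hb5 : 10 ≤ g5 := by
    obtain ⟨ha', e0⟩ := occ_getElem hi5 (show 0 < ([b,b,b,b] : List α).length by simp)
    obtain ⟨hb', e1⟩ := occ_getElem hi5 (show 1 < ([b,b,b,b] : List α).length by simp)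
    obtain ⟨hc', e2⟩ := occ_getElem hi5 (show 2 < ([b,b,b,b] : List α).length by simp)
    obtain ⟨hd', e3⟩ := occ_getElem hi5 (show 3 < ([b,b,b,b] : List α).length by simp)
    rw [hTlen] at ha' hb' hc' hd'
    simp only [List.getElem_cons_zero, List.getElem_cons_succ] at e0 e1 e2 e3
    have p0 := T'_pos_b a b c hab hbc (by omega : i5 - 1 + 0 < 9 + (4 + k0)) e0
    have p1 := T'_pos_b a b c hab hbc (by omega : i5 - 1 + 1 < 9 + (4 + k0)) e1
    have p2 := T'_pos_b a b c hab hbc (by omega : i5 - 1 + 2 < 9 + (4 + k0)) e2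
    have p3 := T'_pos_b a b c hab hbc (by omega : i5 - 1 + 3 < 9 + (4 + k0)) e3
    have hi5' := (mem_occ'.1 hi5).1.1
    omega
  have hsub : ({g1, g2, g3, g4, g5} : Finset ℕ) ⊆ Γ := by
    intro x hx
    simp only [Finset.mem_insert, Finset.mem_singleton] at hx
    rcases hx with rfl | rfl | rfl | rfl | rfl
    exacts [hg1.1, hg2.1, hg3.1, hg4.1, hg5.1]
  have h5 : ({g1, g2, g3, g4, g5} : Finset ℕ).card = 5 := by
    rw [Finset.card_insert_of_notMem (by simp; omega),
      Finset.card_insert_of_notMem (by simp; omega),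
      Finset.card_insert_of_notMem (by simp; omega),
      Finset.card_insert_of_notMem (by simp; omega),
      Finset.card_singleton]
  calc 5 = ({g1, g2, g3, g4, g5} : Finset ℕ).card := h5.symm
    _ ≤ Γ.card := Finset.card_le_card hsub

end low2

/-- For every `n ≥ 12` there are a string `T` of length `n` over `{a, b, c}` and a string
`T'` obtained from `T` by inserting one character (at some position `i`, i.e.
`T' = T[1..i-1] · x · T[i..n]`) with `γ(T) = 2` and `γ(T') = 5`; hence the multiplicative
sensitivity of `γ` under one insertion is at least `5/2` at every such length. -/
theorem gamma_insertion_sensitivity_ge (a b c : α)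
    (hab : a ≠ b) (hac : a ≠ c) (hbc : b ≠ c) (n : ℕ) (hn : 12 ≤ n) :
    ∃ (T T' : List α) (i : ℕ) (x : α),
      T.length = n ∧ (∀ y ∈ T, y = a ∨ y = b ∨ y = c) ∧
      1 ≤ i ∧ i ≤ n + 1 ∧
      T' = T.take (i - 1) ++ x :: T.drop (i - 1) ∧
      (∀ y ∈ T', y = a ∨ y = b ∨ y = c) ∧
      gammaSize T = 2 ∧ gammaSize T' = 5 ∧
      5 * gammaSize T ≤ 2 * gammaSize T' := by
  obtain ⟨m', hm'⟩ : ∃ m', n = 12 + m' := ⟨n - 12, by omega⟩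
  subst hm'
  set M' : ℕ := 4 + m' with hM'
  refine ⟨[a,b,b,b,a,a,a] ++ List.replicate (M' + 1) b,
    [a,b,b,b,a,a,a,b,c] ++ List.replicate M' b, 9, c, ?_, ?_, ?_, ?_, ?_, ?_, ?_, ?_, ?_⟩
  · simp [hM']; omega
  · intro y hy
    simp only [List.mem_append, List.mem_cons, List.mem_replicate, List.not_mem_nil] at hy
    tauto
  · omega
  · omega
  · show ([a,b,b,b,a,a,a,b,c] ++ List.replicate M' b : List α) = _
    rw [List.replicate_succ]
    simp
  · intro y hy
    simp only [List.mem_append, List.mem_cons, List.mem_replicate, List.not_mem_nil] at hy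
    tauto
  · -- gammaSize T = 2
    apply le_antisymm
    · exact Nat.sInf_le ⟨{5, 8}, attractor_T a b (M' + 1) (by omega), by rfl⟩
    · exact le_csInf ⟨2, {5, 8}, attractor_T a b (M' + 1) (by omega), by rfl⟩
        (by rintro k ⟨Γ, hΓ, rfl⟩; exact lower_T a b hab (by omega) hΓ)
  · -- gammaSize T' = 5
    apply le_antisymm
    · exact Nat.sInf_le ⟨{3, 5, 7, 9, 10}, attractor_T' a b c M' (by omega), by rfl⟩
    · exact le_csInf ⟨5, {3, 5, 7, 9, 10}, attractor_T' a b c M' (by omega), by rfl⟩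
        (by rintro k ⟨Γ, hΓ, rfl⟩; exact lower_T' a b c hab hac hbc (by omega) hΓ)
  · -- 5 * γ(T) ≤ 2 * γ(T')
    have h1 : gammaSize ([a,b,b,b,a,a,a] ++ List.replicate (M' + 1) b) = 2 := by
      apply le_antisymm
      · exact Nat.sInf_le ⟨{5, 8}, attractor_T a b (M' + 1) (by omega), by rfl⟩
      · exact le_csInf ⟨2, {5, 8}, attractor_T a b (M' + 1) (by omega), by rfl⟩
          (by rintro k ⟨Γ, hΓ, rfl⟩; exact lower_T a b hab (by omega) hΓ)
    have h2 : gammaSize ([a,b,b,b,a,a,a,b,c] ++ List.replicate M' b) = 5 := by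
      apply le_antisymm
      · exact Nat.sInf_le ⟨{3, 5, 7, 9, 10}, attractor_T' a b c M' (by omega), by rfl⟩
      · exact le_csInf ⟨5, {3, 5, 7, 9, 10}, attractor_T' a b c M' (by omega), by rfl⟩
          (by rintro k ⟨Γ, hΓ, rfl⟩; exact lower_T' a b c hab hac hbc (by omega) hΓ)
    rw [h1, h2]
end

section
/- (Lemma 2, forward direction) Let T = F_1 ⋯ F_m be the grammar parsing of T with respect to some straight-line program G producing T. Then: (i) for each factor F_k with |F_k| > 1 there exist indices i_k < j_k < k such that F_k = F_{i_k} ⋯ F_{j_k} (as a substring of T, i.e., the occurrence of F_k equals the concatenation of factors i_k through j_k occurring earlier in the factorization); and (ii) for any two factors F_x, F_y of length greater than 1 with associated index intervals [i_x..j_x] and [i_y..j_y], these two intervals are either disjoint or one is contained in the other. -/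
/-!
The grammar parsing is produced by a depth-first traversal, which we analyse through an invariant
on the factors emitted so far. Every binary nonterminal `x` whose first occurrence has been
traversed completely owns the interval of factors emitted below that occurrence; these factors
concatenate to the expansion of `x`. The owned intervals come from subtrees of one tree, so any two
are nested or disjoint. A factor of length `> 1` is a later occurrence of some binary nonterminal
`x`; since rules point to smaller nonterminals, `x` is not an ancestor of that occurrence, so it
was already fully traversed: the factor equals the expansion of `x`, and the interval of `x` ends
before it.
-/

/-- A straight-line program: a grammar in Chomsky normal form with nonterminals `0, …, g-1`,
a start symbol, and exactly one production per nonterminal, either `X → c` (a terminal) or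
`X → Y Z` with `Y, Z` strictly smaller nonterminals (which makes the grammar acyclic, so that
each nonterminal derives a unique string). -/
structure SLP (α : Type*) where
  /-- the number of nonterminals (= number of productions = size of the SLP) -/
  g : ℕ
  /-- the start symbol -/
  start : Fin g
  /-- the unique production of each nonterminal -/
  rule : Fin g → α ⊕ (Fin g × Fin g)
  /-- binary rules refer to strictly smaller nonterminals -/
  wf : ∀ i j k, rule i = Sum.inr (j, k) → j < i ∧ k < i

namespace SLP

variable {α : Type*}

/-- The string derived from nonterminal `i`. -/
def expand (G : SLP α) (i : Fin G.g) : List α :=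
  match h : G.rule i with
  | Sum.inl c => [c]
  | Sum.inr (j, k) => G.expand j ++ G.expand k
termination_by i.val
decreasing_by
  · exact (G.wf i j k h).1
  · exact (G.wf i j k h).2

/-- `G` produces the string `T`. -/
def Produces (G : SLP α) (T : List α) : Prop := G.expand G.start = T

/-- The size of an SLP: its number of productions. -/
def size (G : SLP α) : ℕ := G.g

/-- Pre-order traversal of the parse tree computing the leaves of the *partial parse tree*:
a node labeled by a nonterminal with a binary rule is internal only at its leftmost (first in
pre-order) occurrence; all later occurrences become leaves. `seen` is the set of binary
nonterminals already expanded to the left; the function returns the factors contributed by the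
subtree rooted at `i` together with the updated set. -/
def visit (G : SLP α) (i : Fin G.g) (seen : Finset (Fin G.g)) :
    List (List α) × Finset (Fin G.g) :=
  match h : G.rule i with
  | Sum.inl _ => ([G.expand i], seen)
  | Sum.inr (j, k) =>
    if i ∈ seen then ([G.expand i], seen)
    else
      let r₁ := G.visit j (insert i seen)
      let r₂ := G.visit k r₁.2
      (r₁.1 ++ r₂.1, r₂.2)
termination_by i.val
decreasing_by
  · exact (G.wf i j k h).1
  · exact (G.wf i j k h).2

/-- The grammar parsing of the produced string with respect to `G`: the factorization given by
the leaves of the partial parse tree, read left to right. -/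
def grammarParsing (G : SLP α) : List (List α) := (G.visit G.start ∅).1

/-- Nonterminal `i` is used, i.e., reachable from the start symbol. -/
inductive Reachable (G : SLP α) : Fin G.g → Prop
  | start : G.Reachable G.start
  | left {i j k} : G.Reachable i → G.rule i = Sum.inr (j, k) → G.Reachable j
  | right {i j k} : G.Reachable i → G.rule i = Sum.inr (j, k) → G.Reachable k

end SLP

variable {α : Type*}

namespace SLP

variable (G : SLP α)

theorem expand_of_rule_inl {i : Fin G.g} {c : α} (h : G.rule i = Sum.inl c) :
    G.expand i = [c] := by
  rw [expand.eq_def]; split <;> simp_all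

theorem expand_of_rule_inr {i j k : Fin G.g} (h : G.rule i = Sum.inr (j, k)) :
    G.expand i = G.expand j ++ G.expand k := by
  rw [expand.eq_def]; split <;> simp_all

theorem expand_ne_nil (i : Fin G.g) : G.expand i ≠ [] := by
  rcases h : G.rule i with c | ⟨j, k⟩
  · simp [G.expand_of_rule_inl h]
  · have := (G.wf i j k h).1
    simp [G.expand_of_rule_inr h, expand_ne_nil j]
termination_by i.val

theorem visit_of_rule_inl {i : Fin G.g} {c : α} (h : G.rule i = Sum.inl c)
    (seen : Finset (Fin G.g)) : G.visit i seen = ([G.expand i], seen) := by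
  rw [visit.eq_def]; split <;> simp_all

theorem visit_of_mem {i j k : Fin G.g} (h : G.rule i = Sum.inr (j, k))
    {seen : Finset (Fin G.g)} (hi : i ∈ seen) : G.visit i seen = ([G.expand i], seen) := by
  rw [visit.eq_def]; split <;> simp_all

theorem visit_of_notMem {i j k : Fin G.g} (h : G.rule i = Sum.inr (j, k))
    {seen : Finset (Fin G.g)} (hi : i ∉ seen) :
    G.visit i seen =
      ((G.visit j (insert i seen)).1 ++ (G.visit k (G.visit j (insert i seen)).2).1,
        (G.visit k (G.visit j (insert i seen)).2).2) := by
  rw [visit.eq_def]; split <;> simp_all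

theorem flatten_visit_fst (i : Fin G.g) (seen : Finset (Fin G.g)) :
    (G.visit i seen).1.flatten = G.expand i := by
  rcases h : G.rule i with c | ⟨j, k⟩
  · simp [G.visit_of_rule_inl h]
  by_cases hi : i ∈ seen
  · simp [G.visit_of_mem h hi]
  have := G.wf i j k h
  rw [G.visit_of_notMem h hi, List.flatten_append, flatten_visit_fst j,
    flatten_visit_fst k, G.expand_of_rule_inr h]
termination_by i.val

theorem visit_fst_ne_nil (i : Fin G.g) (seen : Finset (Fin G.g)) : (G.visit i seen).1 ≠ [] :=
  fun h => G.expand_ne_nil i (by rw [← G.flatten_visit_fst i seen, h, List.flatten_nil])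

theorem subset_visit_snd (i : Fin G.g) (seen : Finset (Fin G.g)) :
    seen ⊆ (G.visit i seen).2 := by
  rcases h : G.rule i with c | ⟨j, k⟩
  · simp [G.visit_of_rule_inl h]
  by_cases hi : i ∈ seen
  · simp [G.visit_of_mem h hi]
  have := G.wf i j k h
  rw [G.visit_of_notMem h hi]
  exact (Finset.subset_insert i seen).trans
    ((subset_visit_snd j _).trans (subset_visit_snd k _))
termination_by i.val

def NestedOrDisjoint (p q : ℕ × ℕ) : Prop :=
  (p.2 < q.1 ∨ q.2 < p.1) ∨ (p.1 ≤ q.1 ∧ q.2 ≤ p.2) ∨ (q.1 ≤ p.1 ∧ p.2 ≤ q.2)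

theorem NestedOrDisjoint.symm {p q : ℕ × ℕ} (h : NestedOrDisjoint p q) :
    NestedOrDisjoint q p := by
  unfold NestedOrDisjoint at *; omega

def Spells (F : List (List α)) (p : ℕ × ℕ) (w : List α) : Prop :=
  p.1 < p.2 ∧ p.2 < F.length ∧ ((F.take (p.2 + 1)).drop p.1).flatten = w

theorem Spells.append {F : List (List α)} {p : ℕ × ℕ} {w : List α} (h : Spells F p w)
    (L : List (List α)) : Spells (F ++ L) p w := by
  obtain ⟨h₁, h₂, h₃⟩ := h
  refine ⟨h₁, by simp only [List.length_append]; omega, ?_⟩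
  rw [List.take_append_of_le_length (by omega), h₃]

/-- State of the traversal after emitting the factors `F`: `done` holds the nonterminals whose
first (internal) occurrence has been fully traversed, and `intv x` is the interval of factors
emitted below that occurrence. -/
structure VisitInvariant (F : List (List α)) (done : Finset (Fin G.g))
    (intv : Fin G.g → ℕ × ℕ) : Prop where
  spells : ∀ x ∈ done, Spells F (intv x) (G.expand x)
  nested : ∀ x ∈ done, ∀ y ∈ done, NestedOrDisjoint (intv x) (intv y)
  long_factor : ∀ (k : ℕ) (hk : k < F.length), 1 < F[k].length →
    ∃ x ∈ done, F[k] = G.expand x ∧ (intv x).2 < k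

theorem visitInvariant_nil (intv : Fin G.g → ℕ × ℕ) : G.VisitInvariant [] ∅ intv where
  spells := by simp
  nested := by simp
  long_factor := by simp

variable {G}

theorem VisitInvariant.append_singleton {F : List (List α)} {done : Finset (Fin G.g)}
    {intv : Fin G.g → ℕ × ℕ} (hinv : G.VisitInvariant F done intv) {w : List α}
    (hw : 1 < w.length → ∃ x ∈ done, w = G.expand x) :
    G.VisitInvariant (F ++ [w]) done intv where
  spells x hx := (hinv.spells x hx).append _
  nested := hinv.nested
  long_factor k hk hlong := by
    rcases Nat.lt_or_ge k F.length with hlt | hge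
    · rw [List.getElem_append_left hlt] at hlong ⊢
      exact hinv.long_factor k hlt hlong
    · obtain rfl : k = F.length := by
        simp only [List.length_append, List.length_singleton] at hk; omega
      rw [List.getElem_concat_length rfl] at hlong ⊢
      obtain ⟨x, hx, rfl⟩ := hw hlong
      exact ⟨x, hx, rfl, (hinv.spells x hx).2.1⟩

theorem VisitInvariant.insert_suffix {F L : List (List α)} {done : Finset (Fin G.g)}
    {intv : Fin G.g → ℕ × ℕ} (hinv : G.VisitInvariant (F ++ L) done intv) {i : Fin G.g}
    (hi : i ∉ done) (hL : 1 < L.length) (hflat : L.flatten = G.expand i)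
    (hsplit : ∀ x ∈ done, (intv x).2 < F.length ∨ F.length ≤ (intv x).1) :
    G.VisitInvariant (F ++ L) (insert i done)
      (Function.update intv i (F.length, F.length + L.length - 1)) where
  spells x hx := by
    rcases Finset.mem_insert.mp hx with rfl | hx
    · rw [Function.update_self]
      have hend : F.length + L.length - 1 + 1 = (F ++ L).length := by
        rw [List.length_append]; omega
      refine ⟨by dsimp only; omega, by dsimp only; omega, ?_⟩
      rw [hend, List.take_length, List.drop_left, hflat]
    · rw [Function.update_of_ne (ne_of_mem_of_not_mem hx hi)]
      exact hinv.spells x hx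
  nested x hx y hy := by
    have hne : ∀ z ∈ done, z ≠ i := fun z hz => ne_of_mem_of_not_mem hz hi
    have hnew : ∀ z ∈ done, NestedOrDisjoint (F.length, F.length + L.length - 1) (intv z) := by
      intro z hz
      have := (hinv.spells z hz).2.1
      simp only [List.length_append] at this
      unfold NestedOrDisjoint; dsimp only
      rcases hsplit z hz with h | h <;> omega
    rcases Finset.mem_insert.mp hx with hxi | hx <;> rcases Finset.mem_insert.mp hy with hyi | hy
    · simp [hxi, hyi, NestedOrDisjoint]
    · rw [hxi, Function.update_self, Function.update_of_ne (hne y hy)]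
      exact hnew y hy
    · rw [hyi, Function.update_self, Function.update_of_ne (hne x hx)]
      exact (hnew x hx).symm
    · rw [Function.update_of_ne (hne x hx), Function.update_of_ne (hne y hy)]
      exact hinv.nested x hx y hy
  long_factor k hk hlong := by
    obtain ⟨x, hx, heq, hlt⟩ := hinv.long_factor k hk hlong
    refine ⟨x, Finset.mem_insert_of_mem hx, heq, ?_⟩
    rwa [Function.update_of_ne (ne_of_mem_of_not_mem hx hi)]

structure ExtendsAt (done done' : Finset (Fin G.g)) (intv intv' : Fin G.g → ℕ × ℕ) (n : ℕ) :
    Prop where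
  eq : ∀ x ∈ done, intv' x = intv x
  le : ∀ x ∈ done', x ∉ done → n ≤ (intv' x).1

theorem ExtendsAt.refl (done : Finset (Fin G.g)) (intv : Fin G.g → ℕ × ℕ) (n : ℕ) :
    ExtendsAt done done intv intv n :=
  ⟨fun _ _ => rfl, fun _ hx hx' => absurd hx hx'⟩

theorem ExtendsAt.trans {done₀ done₁ done₂ : Finset (Fin G.g)} {v₀ v₁ v₂ : Fin G.g → ℕ × ℕ}
    {m n : ℕ} (h₁ : ExtendsAt done₀ done₁ v₀ v₁ m) (h₂ : ExtendsAt done₁ done₂ v₁ v₂ n)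
    (hsub : done₀ ⊆ done₁) (hmn : m ≤ n) : ExtendsAt done₀ done₂ v₀ v₂ m where
  eq x hx := (h₂.eq x (hsub hx)).trans (h₁.eq x hx)
  le x hx hx₀ := by
    by_cases hx₁ : x ∈ done₁
    · exact h₂.eq x hx₁ ▸ h₁.le x hx₁ hx₀
    · exact hmn.trans (h₂.le x hx hx₁)

theorem ExtendsAt.update {done done' : Finset (Fin G.g)} {intv intv' : Fin G.g → ℕ × ℕ}
    {n : ℕ} (h : ExtendsAt done done' intv intv' n) {i : Fin G.g} (hi : i ∉ done)
    {p : ℕ × ℕ} (hp : n ≤ p.1) :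
    ExtendsAt done (insert i done') intv (Function.update intv' i p) n where
  eq x hx := by rw [Function.update_of_ne (ne_of_mem_of_not_mem hx hi), h.eq x hx]
  le x hx hx₀ := by
    by_cases hxi : x = i
    · rwa [hxi, Function.update_self]
    · rw [Function.update_of_ne hxi]
      exact h.le x ((Finset.mem_insert.mp hx).resolve_left hxi) hx₀

theorem VisitInvariant.lt_or_le_of_extendsAt {F : List (List α)} {done done' : Finset (Fin G.g)}
    {intv intv' : Fin G.g → ℕ × ℕ} (hinv : G.VisitInvariant F done intv)
    (hext : ExtendsAt done done' intv intv' F.length) :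
    ∀ x ∈ done', (intv' x).2 < F.length ∨ F.length ≤ (intv' x).1 := by
  intro x hx
  by_cases hx₀ : x ∈ done
  · exact Or.inl (hext.eq x hx₀ ▸ (hinv.spells x hx₀).2.1)
  · exact Or.inr (hext.le x hx hx₀)

theorem VisitInvariant.visit_of_eq_singleton {F : List (List α)}
    {seen pending : Finset (Fin G.g)} {intv : Fin G.g → ℕ × ℕ}
    (hinv : G.VisitInvariant F (seen \ pending) intv) {i : Fin G.g}
    (hvisit : G.visit i seen = ([G.expand i], seen))
    (hlong : 1 < (G.expand i).length → ∃ x ∈ seen \ pending, G.expand i = G.expand x) :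
    ∃ intv' : Fin G.g → ℕ × ℕ,
      ExtendsAt (seen \ pending) ((G.visit i seen).2 \ pending) intv intv' F.length ∧
      G.VisitInvariant (F ++ (G.visit i seen).1) ((G.visit i seen).2 \ pending) intv' := by
  rw [hvisit]
  exact ⟨intv, ExtendsAt.refl _ _ _, hinv.append_singleton hlong⟩

/-- `pending` holds the ancestors of `i` on the traversal stack: they have been seen, but their
intervals are not closed yet. -/
theorem VisitInvariant.visit {F : List (List α)} {seen pending : Finset (Fin G.g)}
    {intv : Fin G.g → ℕ × ℕ} (hinv : G.VisitInvariant F (seen \ pending) intv) (i : Fin G.g)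
    (hpending : ∀ x ∈ pending, i < x) :
    ∃ intv' : Fin G.g → ℕ × ℕ,
      ExtendsAt (seen \ pending) ((G.visit i seen).2 \ pending) intv intv' F.length ∧
      G.VisitInvariant (F ++ (G.visit i seen).1) ((G.visit i seen).2 \ pending) intv' := by
  have hi : i ∉ pending := fun h => lt_irrefl i (hpending i h)
  rcases hrule : G.rule i with c | ⟨j, k⟩
  · exact hinv.visit_of_eq_singleton (G.visit_of_rule_inl hrule seen) fun h => by
      simp [G.expand_of_rule_inl hrule] at h
  by_cases hseen : i ∈ seen
  · exact hinv.visit_of_eq_singleton (G.visit_of_mem hrule hseen) fun _ =>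
      ⟨i, Finset.mem_sdiff.2 ⟨hseen, hi⟩, rfl⟩
  obtain ⟨hj, hk⟩ := G.wf i j k hrule
  rw [G.visit_of_notMem hrule hseen]
  set s₁ := (G.visit j (insert i seen)).2
  set L₁ := (G.visit j (insert i seen)).1
  set s₂ := (G.visit k s₁).2
  set L₂ := (G.visit k s₁).1
  have hdone₀ : insert i seen \ insert i pending = seen \ pending := by
    rw [Finset.insert_sdiff_insert, Finset.sdiff_insert_of_notMem hseen]
  obtain ⟨v₁, hext₁, hinv₁⟩ := VisitInvariant.visit (hdone₀ ▸ hinv) j <| by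
    simpa [hj] using fun x hx => hj.trans (hpending x hx)
  obtain ⟨v₂, hext₂, hinv₂⟩ := VisitInvariant.visit hinv₁ k <| by
    simpa [hk] using fun x hx => hk.trans (hpending x hx)
  have hext : ExtendsAt (seen \ pending) (s₂ \ insert i pending) intv v₂ F.length := by
    rw [← hdone₀]
    exact hext₁.trans hext₂ (Finset.sdiff_subset_sdiff (G.subset_visit_snd j _) le_rfl)
      (by simp)
  have hdone : s₂ \ pending = insert i (s₂ \ insert i pending) := by
    have hi₂ : i ∈ s₂ :=
      G.subset_visit_snd k _ (G.subset_visit_snd j _ (Finset.mem_insert_self i seen))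
    ext x; by_cases hxi : x = i <;> simp_all
  have hlen : 1 < (L₁ ++ L₂).length := by
    have h₁ : 0 < L₁.length := List.length_pos_iff.2 (G.visit_fst_ne_nil j _)
    have h₂ : 0 < L₂.length := List.length_pos_iff.2 (G.visit_fst_ne_nil k _)
    simp only [List.length_append]; omega
  have hflat : (L₁ ++ L₂).flatten = G.expand i := by
    rw [List.flatten_append, G.flatten_visit_fst, G.flatten_visit_fst, G.expand_of_rule_inr hrule]
  rw [List.append_assoc] at hinv₂
  rw [hdone]
  exact ⟨_, hext.update (by simp [hseen]) le_rfl,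
    hinv₂.insert_suffix (by simp) hlen hflat (hinv.lt_or_le_of_extendsAt hext)⟩
termination_by i.val

theorem VisitInvariant.exists_intervals {F : List (List α)} {done : Finset (Fin G.g)}
    {intv : Fin G.g → ℕ × ℕ} (hinv : G.VisitInvariant F done intv) :
    ∃ I J : ℕ → ℕ,
      (∀ k : Fin F.length, 1 < (F.get k).length →
        I k < J k ∧ J k < k ∧ F.get k = ((F.take (J k + 1)).drop (I k)).flatten) ∧
      (∀ x y : Fin F.length, 1 < (F.get x).length → 1 < (F.get y).length →
        (J x < I y ∨ J y < I x) ∨ (I x ≤ I y ∧ J y ≤ J x) ∨ (I y ≤ I x ∧ J x ≤ J y)) := by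
  have hchoice : ∀ k : ℕ, ∃ p : ℕ × ℕ, ∀ (hk : k < F.length), 1 < F[k].length →
      ∃ x ∈ done, p = intv x ∧ F[k] = G.expand x ∧ p.2 < k := by
    intro k
    by_cases h : ∃ hk : k < F.length, 1 < F[k].length
    · obtain ⟨hk, hlong⟩ := h
      obtain ⟨x, hx, heq, hlt⟩ := hinv.long_factor k hk hlong
      exact ⟨intv x, fun _ _ => ⟨x, hx, rfl, heq, hlt⟩⟩
    · exact ⟨(0, 0), fun hk hlong => absurd ⟨hk, hlong⟩ h⟩
  choose P hP using hchoice
  refine ⟨fun k => (P k).1, fun k => (P k).2, ?_, ?_⟩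
  · intro k hlong
    rw [List.get_eq_getElem] at hlong ⊢
    obtain ⟨x, hx, hPx, heq, hlt⟩ := hP k k.isLt hlong
    obtain ⟨hlt', -, hspell⟩ := hinv.spells x hx
    dsimp only
    rw [hPx] at hlt ⊢
    exact ⟨hlt', hlt, heq.trans hspell.symm⟩
  · intro x y hx hy
    rw [List.get_eq_getElem] at hx hy
    obtain ⟨a, ha, hPa, -⟩ := hP x x.isLt hx
    obtain ⟨b, hb, hPb, -⟩ := hP y y.isLt hy
    dsimp only
    rw [hPa, hPb]
    exact hinv.nested a ha b hb

end SLP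

/-- Lemma 2, forward direction: if `F = F_1 ⋯ F_m` is the grammar parsing of `T` with respect
to an SLP `G` producing `T` (in particular the factors concatenate to `T`), then one can
associate to each factor `F_k` of length `> 1` an index interval `[I k .. J k]` with
`I k < J k < k` such that `F_k = F_{I k} ⋯ F_{J k}`, and any two such intervals are either
disjoint or one is contained in the other. (Indices of factors are 0-based here.) -/
theorem SLP.grammarParsing_spec (G : SLP α) (T : List α) (hT : G.Produces T) :
    G.grammarParsing.flatten = T ∧
    ∃ I J : ℕ → ℕ,
      (∀ k : Fin G.grammarParsing.length, 1 < (G.grammarParsing.get k).length →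
        I k < J k ∧ J k < k ∧
        G.grammarParsing.get k = ((G.grammarParsing.take (J k + 1)).drop (I k)).flatten) ∧
      (∀ x y : Fin G.grammarParsing.length,
        1 < (G.grammarParsing.get x).length → 1 < (G.grammarParsing.get y).length →
        (J x < I y ∨ J y < I x) ∨
        (I x ≤ I y ∧ J y ≤ J x) ∨ (I y ≤ I x ∧ J x ≤ J y)) := by
  obtain ⟨intv, -, hinv⟩ :=
    (G.visitInvariant_nil fun _ => (0, 0)).visit (seen := ∅) (pending := ∅) G.start (by simp)
  rw [List.nil_append, Finset.sdiff_empty] at hinv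
  exact ⟨(G.flatten_visit_fst G.start ∅).trans hT, hinv.exists_intervals⟩
end
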